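/- arXiv:2512.05890 — 8 statements merged into one kernel-verified Lean document; each statement's English description precedes it below -/
import Mathlib

section
/- For n ≥ 2, the number of indecomposable meanders on n nodes is 3^(n-1). Equivalently, the number of pairs of compositions (λ, μ) of n whose sets of partial sums intersect only in {n} is 3^(n-1). -/
/-- The set of partial sums of a list: sums of nonempty prefixes. -/
def PSums (l : List ℕ) : Set ℕ :=
  {m | ∃ k, 0 < k ∧ k ≤ l.length ∧ (l.take k).sum = m}

/-- `l` is a composition of `n`: a list of positive integers summing to `n`. -/
def IsComposition (l : List ℕ) (n : ℕ) : Prop :=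
  (∀ x ∈ l, 0 < x) ∧ l.sum = n

/-! A composition of `n` is determined by its partial sums strictly below `n`, which form an
arbitrary subset of `{1, …, n - 1}`. Every composition of `n ≥ 1` has `n` as a partial sum, so
`PSums λ ∩ PSums μ = {n}` says exactly that these two subsets are disjoint. Choosing the first
subset `s` leaves `2 ^ (n - 1 - |s|)` choices for the second, and the binomial theorem gives
`∑ₛ 2 ^ (n - 1 - |s|) = (1 + 2) ^ (n - 1)`. -/

open Finset

theorem Finset.card_disjoint_pairs (α : Type*) [Fintype α] [DecidableEq α] :
    Fintype.card {p : Finset α × Finset α // Disjoint p.1 p.2} = 3 ^ Fintype.card α := by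
  have hfiber (s : Finset α) : #{t : Finset α | Disjoint s t} = 2 ^ (Fintype.card α - #s) := by
    rw [← card_compl, ← card_powerset]
    congr 1
    ext t
    simp [subset_compl_iff_disjoint_left]
  calc Fintype.card {p : Finset α × Finset α // Disjoint p.1 p.2}
      = ∑ s : Finset α, #{t : Finset α | Disjoint s t} := by
        rw [Fintype.card_subtype, ← univ_product_univ, card_filter, sum_product]
        simp only [card_filter]
    _ = ∑ s : Finset α, 1 ^ #s * 2 ^ (Fintype.card α - #s) := by
        simp only [hfiber, one_pow, one_mul]
    _ = 3 ^ Fintype.card α := Fintype.sum_pow_mul_eq_add_pow α 1 2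

namespace IsComposition

variable {l : List ℕ} {n : ℕ}

theorem psums_subset_Icc (h : IsComposition l n) : PSums l ⊆ Set.Icc 1 n := by
  rintro _ ⟨k, hk, hkl, rfl⟩
  obtain ⟨x, hx⟩ := List.exists_mem_of_ne_nil (l.take k)
    (List.ne_nil_of_length_pos (by rw [List.length_take]; omega))
  constructor
  · exact (h.1 x (List.mem_of_mem_take hx)).trans_le (List.le_sum_of_mem hx)
  · exact h.2 ▸ List.Sublist.sum_le_sum (List.take_sublist k l) (fun _ _ => Nat.zero_le _)

theorem mem_psums (h : IsComposition l n) (hn : 0 < n) : n ∈ PSums l := by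
  refine ⟨l.length, List.length_pos_iff.2 ?_, le_rfl, by simpa using h.2⟩
  rintro rfl
  exact hn.ne' h.2.symm

theorem psums_inter_eq_singleton_iff {l' : List ℕ} (h : IsComposition l n)
    (h' : IsComposition l' n) (hn : 0 < n) :
    PSums l ∩ PSums l' = {n} ↔ ∀ m < n, m ∈ PSums l → m ∉ PSums l' := by
  refine ⟨fun hI m hm h₁ h₂ => hm.ne (hI.subset ⟨h₁, h₂⟩), fun hI => ?_⟩
  refine Set.Subset.antisymm (fun m ⟨h₁, h₂⟩ => ?_) ?_
  · exact (h.psums_subset_Icc h₁).2.eq_of_not_lt fun hm => hI m hm h₁ h₂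
  · rintro _ rfl
    exact ⟨h.mem_psums hn, h'.mem_psums hn⟩

end IsComposition

namespace Composition

theorem isComposition {n : ℕ} (c : Composition n) : IsComposition c.blocks n :=
  ⟨fun _ => c.blocks_pos, c.blocks_sum⟩

noncomputable def innerPartialSumsEquiv (n : ℕ) : Composition n ≃ Finset (Fin (n - 1)) :=
  (compositionEquiv n).trans (compositionAsSetEquiv n)

theorem mem_innerPartialSumsEquiv_iff {n : ℕ} (c : Composition n) (i : Fin (n - 1)) :
    i ∈ innerPartialSumsEquiv n c ↔ 1 + (i : ℕ) ∈ PSums c.blocks := by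
  simp only [innerPartialSumsEquiv, compositionAsSetEquiv, compositionEquiv, Equiv.trans_apply,
    Equiv.coe_fn_mk, Set.mem_toFinset, Set.mem_ofPred_eq,
    CompositionAsSet.mem_boundaries_iff_exists_blocks_sum_take_eq, c.toCompositionAsSet_blocks,
    c.toCompositionAsSet_boundaries, c.card_boundaries_eq_succ_length]
  have hlen := c.blocks_length
  constructor
  · rintro ⟨k, hk, hsum⟩
    refine ⟨k, Nat.pos_of_ne_zero ?_, by omega, hsum⟩
    rintro rfl
    rw [List.take_zero, List.sum_nil] at hsum
    omega
  · rintro ⟨k, -, hk, hsum⟩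
    exact ⟨k, by omega, hsum⟩

theorem psums_inter_eq_singleton_iff_disjoint {n : ℕ} (hn : 0 < n) (c c' : Composition n) :
    PSums c.blocks ∩ PSums c'.blocks = {n} ↔
      Disjoint (innerPartialSumsEquiv n c) (innerPartialSumsEquiv n c') := by
  rw [c.isComposition.psums_inter_eq_singleton_iff c'.isComposition hn, Finset.disjoint_left]
  simp only [mem_innerPartialSumsEquiv_iff]
  refine ⟨fun h i => h _ (by omega), fun h m hm h₁ => ?_⟩
  have hm₀ := (c.isComposition.psums_subset_Icc h₁).1
  obtain ⟨i, rfl⟩ : ∃ i : Fin (n - 1), 1 + (i : ℕ) = m := ⟨⟨m - 1, by omega⟩, by simp; omega⟩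
  exact h h₁

end Composition

def compositionPairsEquiv (n : ℕ) (P : List ℕ → List ℕ → Prop) :
    {p : List ℕ × List ℕ | IsComposition p.1 n ∧ IsComposition p.2 n ∧ P p.1 p.2} ≃
      {p : Composition n × Composition n // P p.1.blocks p.2.blocks} where
  toFun p := ⟨(⟨p.1.1, p.2.1.1 _, p.2.1.2⟩, ⟨p.1.2, p.2.2.1.1 _, p.2.2.1.2⟩), p.2.2.2⟩
  invFun p := ⟨(p.1.1.blocks, p.1.2.blocks), p.1.1.isComposition, p.1.2.isComposition, p.2⟩
  left_inv _ := rfl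
  right_inv _ := rfl

/-- For `n ≥ 2`, the number of indecomposable meanders on `n` nodes, i.e. pairs of
compositions of `n` whose sets of partial sums intersect only in `{n}`, is `3^(n-1)`. -/
theorem stmt0 (n : ℕ) (hn : 2 ≤ n) :
    {p : List ℕ × List ℕ | IsComposition p.1 n ∧ IsComposition p.2 n ∧
      PSums p.1 ∩ PSums p.2 = {n}}.ncard = 3 ^ (n - 1) := by
  let E := Composition.innerPartialSumsEquiv n
  calc _ = Nat.card {p : Composition n × Composition n //
          PSums p.1.blocks ∩ PSums p.2.blocks = {n}} :=
        (Nat.card_coe_set_eq _).symm.trans (Nat.card_congr <|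
          compositionPairsEquiv n fun l l' => PSums l ∩ PSums l' = {n})
    _ = Nat.card {q : Finset (Fin (n - 1)) × Finset (Fin (n - 1)) // Disjoint q.1 q.2} :=
        Nat.card_congr <| Equiv.subtypeEquiv (E.prodCongr E) fun p =>
          Composition.psums_inter_eq_singleton_iff_disjoint (by omega) p.1 p.2
    _ = 3 ^ (n - 1) := by
      rw [Nat.card_eq_fintype_card, Finset.card_disjoint_pairs, Fintype.card_fin]
end

section
/- Let b_n be the number of pairs (λ, μ) of compositions of n into parts from {2,3} with PS(λ) ∩ PS(μ) = {n}. Then b_n satisfies the recursion b_n = b_{n-1} + b_{n-3} for n > 6. -/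
/-- The number of indecomposable meanders on `n` nodes with all parts in `{2,3}`:
pairs `(λ, μ)` of compositions of `n` into parts `2` and `3` with
`PS(λ) ∩ PS(μ) = {n}`. -/
noncomputable def numIndec23 (n : ℕ) : ℕ :=
  {p : List ℕ × List ℕ | (∀ x ∈ p.1, x = 2 ∨ x = 3) ∧ (∀ x ∈ p.2, x = 2 ∨ x = 3) ∧
    p.1.sum = n ∧ p.2.sum = n ∧ PSums p.1 ∩ PSums p.2 = {n}}.ncard

/-! Deleting the last parts `a`, `b` of an indecomposable meander on `n` nodes leaves a pair of
compositions of `n - a` and `n - b` into parts 2 and 3 whose sets of partial sums are disjoint,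
and every such pair arises. Moreover `a ≠ b`, since otherwise `n - a` would be a common partial
sum. Writing `u s t` for the number of such disjoint pairs, which is symmetric in `s` and `t`,
this gives `b n = 2 u (n-2) (n-3)`. For `t < s`, deleting the last part of the first composition
creates no new coincidence, as the partial sum `s` exceeds every partial sum of the second one:
`u s t = u (s-2) t + u (s-3) t`. Applied to `u (s+1) s` and then to `u s (s-2)`, together with
`u (s-2) (s-2) = 0`, this gives `u (s+1) s = u s (s-1) + u (s-2) (s-3)`, which is the
recursion. -/

theorem Set.ncard_eq_ncard_preimage_add_ncard_preimage {α β : Type*} {f g : α → β}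
    (hf : Function.Injective f) (hg : Function.Injective g)
    (hfg : Disjoint (Set.range f) (Set.range g)) {S : Set β}
    (hS : S ⊆ Set.range f ∪ Set.range g) (hfin : S.Finite) :
    S.ncard = (f ⁻¹' S).ncard + (g ⁻¹' S).ncard := by
  have hsplit : S = (S ∩ Set.range f) ∪ (S ∩ Set.range g) := by
    rw [← Set.inter_union_distrib_left, Set.inter_eq_left.mpr hS]
  rw [← Set.preimage_inter_range (f := f), ← Set.preimage_inter_range (f := g),
    Set.ncard_preimage_of_injective_subset_range hf Set.inter_subset_right,
    Set.ncard_preimage_of_injective_subset_range hg Set.inter_subset_right]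
  conv_lhs => rw [hsplit]
  exact Set.ncard_union_eq (hfg.mono Set.inter_subset_right Set.inter_subset_right)
    (hfin.subset Set.inter_subset_left) (hfin.subset Set.inter_subset_left)

theorem List.finite_setOf_sum_eq (n : ℕ) :
    {l : List ℕ | (∀ x ∈ l, 0 < x) ∧ l.sum = n}.Finite :=
  (Set.finite_range (Composition.blocks (n := n))).subset
    fun l ⟨hpos, hsum⟩ => ⟨⟨l, hpos _, hsum⟩, rfl⟩

theorem pSums_append_singleton (l : List ℕ) (a : ℕ) :
    PSums (l ++ [a]) = insert (l.sum + a) (PSums l) := by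
  ext m
  simp only [PSums, Set.mem_ofPred_eq, Set.mem_insert_iff, List.length_append,
    List.length_singleton]
  constructor
  · rintro ⟨k, hk0, hk, rfl⟩
    rcases Nat.lt_or_ge k (l.length + 1) with h | h
    · exact .inr ⟨k, hk0, by omega, by rw [List.take_append_of_le_length (by omega)]⟩
    · left
      rw [List.take_of_length_le (by simpa using h), List.sum_append, List.sum_singleton]
  · rintro (rfl | ⟨k, hk0, hk, rfl⟩)
    · exact ⟨l.length + 1, by omega, le_rfl, by simp⟩
    · exact ⟨k, hk0, by omega, by rw [List.take_append_of_le_length hk]⟩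

theorem notMem_pSums_of_sum_lt {l : List ℕ} {m : ℕ} (h : l.sum < m) : m ∉ PSums l := by
  rintro ⟨k, -, -, rfl⟩
  exact h.not_ge (List.Sublist.sum_le_sum (List.take_sublist k l) fun _ _ => Nat.zero_le _)

theorem sum_mem_pSums {l : List ℕ} (h : l ≠ []) : l.sum ∈ PSums l :=
  ⟨l.length, List.length_pos_iff.mpr h, le_rfl, by simp⟩

theorem Set.insert_inter_insert_eq_singleton_iff {α : Type*} {A B : Set α} {x : α}
    (hx : x ∉ A) : insert x A ∩ insert x B = {x} ↔ Disjoint A B := by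
  simp only [Set.ext_iff, Set.mem_inter_iff, Set.mem_insert_iff, Set.mem_singleton_iff,
    Set.disjoint_left]
  grind

theorem disjoint_range_prodMap_append_singleton {α β γ : Type*} {a b : α} (hab : a ≠ b)
    (f g : β → γ) :
    Disjoint (Set.range (Prod.map (· ++ [a]) f)) (Set.range (Prod.map (· ++ [b]) g)) := by
  rw [Set.disjoint_left]
  rintro _ ⟨⟨l, x⟩, rfl⟩ ⟨⟨l', y⟩, h⟩
  have := congrArg (fun p => p.1.getLast?) h
  simp_all

def PartsIn23 (l : List ℕ) : Prop := ∀ x ∈ l, x = 2 ∨ x = 3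

theorem PartsIn23.pos {l : List ℕ} (h : PartsIn23 l) : ∀ x ∈ l, 0 < x := fun x hx => by
  rcases h x hx with rfl | rfl <;> norm_num

theorem partsIn23_append_singleton {l : List ℕ} {a : ℕ} (ha : a = 2 ∨ a = 3) :
    PartsIn23 (l ++ [a]) ↔ PartsIn23 l := by
  simp [PartsIn23, or_imp, forall_and, ha]

theorem finite_setOf_partsIn23_sum_eq (n : ℕ) : {l | PartsIn23 l ∧ l.sum = n}.Finite :=
  (List.finite_setOf_sum_eq n).subset fun _ ⟨h, hsum⟩ => ⟨h.pos, hsum⟩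

theorem PartsIn23.exists_eq_append_singleton {l : List ℕ} (h : PartsIn23 l) (hs : 0 < l.sum) :
    ∃ l' a, (a = 2 ∨ a = 3) ∧ l = l' ++ [a] := by
  have hne : l ≠ [] := by rintro rfl; simp at hs
  exact ⟨l.dropLast, l.getLast hne, h _ (List.getLast_mem hne),
    (List.dropLast_append_getLast hne).symm⟩

def meanders (n : ℕ) : Set (List ℕ × List ℕ) :=
  {p | PartsIn23 p.1 ∧ PartsIn23 p.2 ∧ p.1.sum = n ∧ p.2.sum = n ∧ PSums p.1 ∩ PSums p.2 = {n}}

def openMeanders (s t : ℕ) : Set (List ℕ × List ℕ) :=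
  {p | PartsIn23 p.1 ∧ PartsIn23 p.2 ∧ p.1.sum = s ∧ p.2.sum = t ∧
    Disjoint (PSums p.1) (PSums p.2)}

theorem finite_openMeanders (s t : ℕ) : (openMeanders s t).Finite :=
  ((finite_setOf_partsIn23_sum_eq s).prod (finite_setOf_partsIn23_sum_eq t)).subset
    fun _ ⟨h₁, h₂, hs, ht, _⟩ => ⟨⟨h₁, hs⟩, h₂, ht⟩

theorem finite_meanders (n : ℕ) : (meanders n).Finite :=
  ((finite_setOf_partsIn23_sum_eq n).prod (finite_setOf_partsIn23_sum_eq n)).subset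
    fun _ ⟨h₁, h₂, hs, ht, _⟩ => ⟨⟨h₁, hs⟩, h₂, ht⟩

theorem preimage_prodMap_append_meanders {a b s t n : ℕ} (ha : a = 2 ∨ a = 3)
    (hb : b = 2 ∨ b = 3) (hs : s + a = n) (ht : t + b = n) :
    Prod.map (· ++ [a]) (· ++ [b]) ⁻¹' meanders n = openMeanders s t := by
  ext ⟨l, m⟩
  simp only [Set.mem_preimage, Prod.map, meanders, openMeanders, Set.mem_ofPred_eq,
    partsIn23_append_singleton ha, partsIn23_append_singleton hb, pSums_append_singleton,
    List.sum_append, List.sum_singleton]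
  refine and_congr_right fun _ => and_congr_right fun _ => ?_
  constructor
  · rintro ⟨hl, hm, hint⟩
    rw [hl, hm, Set.insert_inter_insert_eq_singleton_iff (notMem_pSums_of_sum_lt (by omega))]
      at hint
    exact ⟨by omega, by omega, hint⟩
  · rintro ⟨hl, hm, hdisj⟩
    refine ⟨by omega, by omega, ?_⟩
    rwa [hl, hm, hs, ht, Set.insert_inter_insert_eq_singleton_iff
      (notMem_pSums_of_sum_lt (by omega))]

theorem openMeanders_self_eq_empty {s : ℕ} (hs : 0 < s) : openMeanders s s = ∅ := by
  refine Set.eq_empty_of_forall_notMem fun ⟨l, m⟩ ⟨_, _, hl, hm, hdisj⟩ => ?_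
  have hne : l ≠ [] := by rintro rfl; simp at hl; omega
  have hne' : m ≠ [] := by rintro rfl; simp at hm; omega
  exact Set.disjoint_left.mp hdisj (sum_mem_pSums hne) (hl ▸ hm ▸ sum_mem_pSums hne')

theorem preimage_swap_openMeanders (s t : ℕ) :
    Prod.swap ⁻¹' openMeanders s t = openMeanders t s := by
  ext ⟨l, m⟩
  simp only [Set.mem_preimage, Prod.swap, openMeanders, Set.mem_ofPred_eq, disjoint_comm]
  tauto

theorem ncard_openMeanders_comm (s t : ℕ) :
    (openMeanders s t).ncard = (openMeanders t s).ncard := by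
  rw [← preimage_swap_openMeanders, Set.ncard_preimage_of_injective_subset_range
    Prod.swap_injective (by simp [Set.range_eq_univ.mpr Prod.swap_surjective])]

theorem preimage_prodMap_append_openMeanders {c s' s t : ℕ} (hc : c = 2 ∨ c = 3)
    (hs : s' + c = s) (ht : t < s) :
    Prod.map (· ++ [c]) id ⁻¹' openMeanders s t = openMeanders s' t := by
  ext ⟨l, m⟩
  simp only [Set.mem_preimage, Prod.map, id, openMeanders, Set.mem_ofPred_eq,
    partsIn23_append_singleton hc, pSums_append_singleton, List.sum_append, List.sum_singleton,
    Set.disjoint_insert_left]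
  refine and_congr_right fun _ => and_congr_right fun _ => ?_
  constructor
  · rintro ⟨hl, hm, -, hdisj⟩
    exact ⟨by omega, hm, hdisj⟩
  · rintro ⟨hl, hm, hdisj⟩
    exact ⟨by omega, hm, notMem_pSums_of_sum_lt (by omega), hdisj⟩

theorem numIndec23_eq_ncard_meanders (n : ℕ) : numIndec23 n = (meanders n).ncard := rfl

theorem numIndec23_eq_add {n : ℕ} (hn : 4 ≤ n) :
    numIndec23 n =
      (openMeanders (n - 2) (n - 3)).ncard + (openMeanders (n - 3) (n - 2)).ncard := by
  have hcover : meanders n ⊆ Set.range (Prod.map (· ++ [2]) (· ++ [3])) ∪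
      Set.range (Prod.map (· ++ [3]) (· ++ [2])) := by
    rintro ⟨l, m⟩ hp
    have ⟨hl, hm, hls, hms, _⟩ := hp
    obtain ⟨l', a, ha, rfl⟩ := hl.exists_eq_append_singleton (by omega)
    obtain ⟨m', b, hb, rfl⟩ := hm.exists_eq_append_singleton (by omega)
    have hopen : (l', m') ∈ openMeanders (n - a) (n - b) := by
      rw [← preimage_prodMap_append_meanders (n := n) ha hb (by omega) (by omega)]
      exact hp
    rcases ha with rfl | rfl <;> rcases hb with rfl | rfl
    · rw [openMeanders_self_eq_empty (by omega)] at hopen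
      exact hopen.elim
    · exact .inl ⟨(l', m'), rfl⟩
    · exact .inr ⟨(l', m'), rfl⟩
    · rw [openMeanders_self_eq_empty (by omega)] at hopen
      exact hopen.elim
  rw [numIndec23_eq_ncard_meanders,
    Set.ncard_eq_ncard_preimage_add_ncard_preimage
      ((List.append_left_injective _).prodMap (List.append_left_injective _))
      ((List.append_left_injective _).prodMap (List.append_left_injective _))
      (disjoint_range_prodMap_append_singleton (by decide) _ _) hcover (finite_meanders n),
    preimage_prodMap_append_meanders (s := n - 2) (t := n - 3) (.inl rfl) (.inr rfl)
      (by omega) (by omega),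
    preimage_prodMap_append_meanders (s := n - 3) (t := n - 2) (.inr rfl) (.inl rfl)
      (by omega) (by omega)]

theorem ncard_openMeanders_eq_add {s t : ℕ} (hs : 3 ≤ s) (ht : t < s) :
    (openMeanders s t).ncard =
      (openMeanders (s - 2) t).ncard + (openMeanders (s - 3) t).ncard := by
  have hcover : openMeanders s t ⊆ Set.range (Prod.map (· ++ [2]) id) ∪
      Set.range (Prod.map (· ++ [3]) id) := by
    rintro ⟨l, m⟩ ⟨hl, -, hls, -⟩
    obtain ⟨l', c, hc | hc, rfl⟩ := hl.exists_eq_append_singleton (by omega) <;> subst hc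
    · exact .inl ⟨(l', m), rfl⟩
    · exact .inr ⟨(l', m), rfl⟩
  rw [Set.ncard_eq_ncard_preimage_add_ncard_preimage
      ((List.append_left_injective _).prodMap Function.injective_id)
      ((List.append_left_injective _).prodMap Function.injective_id)
      (disjoint_range_prodMap_append_singleton (by decide) _ _) hcover (finite_openMeanders s t),
    preimage_prodMap_append_openMeanders (s' := s - 2) (.inl rfl) (by omega) ht,
    preimage_prodMap_append_openMeanders (s' := s - 3) (.inr rfl) (by omega) ht]

theorem ncard_openMeanders_succ_self {s : ℕ} (hs : 3 ≤ s) :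
    (openMeanders (s + 1) s).ncard =
      (openMeanders s (s - 1)).ncard + (openMeanders (s - 2) (s - 3)).ncard := by
  have h₂ : (openMeanders (s + 1 - 2) s).ncard = (openMeanders s (s - 1)).ncard := by
    rw [ncard_openMeanders_comm, show s + 1 - 2 = s - 1 by omega]
  have h₃ : (openMeanders (s + 1 - 3) s).ncard = (openMeanders (s - 2) (s - 3)).ncard := by
    rw [ncard_openMeanders_comm, ncard_openMeanders_eq_add hs (by omega),
      show s + 1 - 3 = s - 2 by omega, openMeanders_self_eq_empty (by omega), Set.ncard_empty,
      zero_add, ncard_openMeanders_comm]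
  rw [ncard_openMeanders_eq_add (by omega) (by omega), h₂, h₃]

theorem numIndec23_eq_two_mul {n : ℕ} (hn : 4 ≤ n) :
    numIndec23 n = 2 * (openMeanders (n - 2) (n - 3)).ncard := by
  rw [numIndec23_eq_add hn, ncard_openMeanders_comm (n - 3), two_mul]

/-- For `n > 6`, the number `b_n` of indecomposable meanders on `n` nodes with parts
in `{2,3}` satisfies `b_n = b_{n-1} + b_{n-3}`. -/
theorem stmt5 (n : ℕ) (hn : 6 < n) :
    numIndec23 n = numIndec23 (n - 1) + numIndec23 (n - 3) := by
  obtain ⟨s, rfl⟩ : ∃ s, n = s + 3 := ⟨n - 3, by omega⟩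
  rw [numIndec23_eq_two_mul (by omega), numIndec23_eq_two_mul (by omega),
    numIndec23_eq_two_mul (by omega), ← mul_add]
  simp only [Nat.reduceSubDiff, Nat.add_sub_cancel]
  rw [ncard_openMeanders_succ_self (by omega)]
end

section
/- Let j ≥ 3 and let π be a permutation of {1,...,n} with all displacements π(i) − i in {−2, −1, j−2}. If r > 1 is the smallest index greater than 1 with displacement π(r) − r = j − 2, then r ≤ j; moreover π(i) − i = −1 for all 2 ≤ i ≤ r−1, and π(ℓ) − ℓ = −2 for all r+1 ≤ ℓ ≤ j. -/
/-!
Position `0` cannot move left, so it jumps to `k = j - 2`. Before the first later jump every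
position moves left by one: a move by two would land below `0` or on the value taken by its left
neighbour. Hence `j - 1` cannot lie before that jump, since it would then also land on `j - 2`. After the
jump, at `r - 1`, each value `i - 2` with `r ≤ i < j` must be hit by `i` itself: its left
neighbour does not move by `-1`, and a jump onto it would start at a negative position.
-/

namespace Equiv.Perm

variable {n : ℕ} (π : Equiv.Perm (Fin n))

def disp (i : Fin n) : ℤ := ((π i : ℕ) : ℤ) - (i : ℕ)

theorem eq_of_add_disp_eq {a b : Fin n}
    (h : ((a : ℕ) : ℤ) + π.disp a = (b : ℕ) + π.disp b) : a = b :=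
  π.injective <| Fin.ext <| by unfold disp at h; omega

theorem neg_val_le_disp (i : Fin n) : -((i : ℕ) : ℤ) ≤ π.disp i := by
  unfold disp; omega

variable {π} {k : ℤ} (hd : ∀ i, π.disp i ∈ ({-2, -1, k} : Set ℤ))
include hd

theorem disp_eq_or (i : Fin n) : π.disp i = -2 ∨ π.disp i = -1 ∨ π.disp i = k := by
  simpa only [Set.mem_insert_iff, Set.mem_singleton_iff] using hd i

theorem disp_zero (h0 : 0 < n) : π.disp ⟨0, h0⟩ = k := by
  have := π.neg_val_le_disp ⟨0, h0⟩
  simp only [CharP.cast_eq_zero, neg_zero] at this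
  rcases disp_eq_or hd ⟨0, h0⟩ with h | h | h <;> omega

theorem val_ne_of_disp_eq_neg_one {i : Fin n} (hi : π.disp i = -1) : ((i : ℕ) : ℤ) ≠ k + 1 := by
  intro hik
  have h0 : 0 < n := i.pos
  have hi0 := congrArg Fin.val (π.eq_of_add_disp_eq (a := i) (b := ⟨0, h0⟩)
    (by rw [disp_zero hd h0, hi, hik]; simp))
  have := π.neg_val_le_disp i
  simp only at hi0
  omega

theorem disp_eq_neg_one_of_forall_ne (m : ℕ)
    (hne : ∀ i (hi : i < n), 1 ≤ i → i ≤ m → π.disp ⟨i, hi⟩ ≠ k) :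
    ∀ i (hi : i < n), 1 ≤ i → i ≤ m → π.disp ⟨i, hi⟩ = -1 := by
  intro i
  induction i with
  | zero => intro _ h; omega
  | succ i ih =>
    intro hi h1 hm
    rcases disp_eq_or hd ⟨i + 1, hi⟩ with h | h | h
    · exfalso
      obtain rfl | hi1 := Nat.eq_zero_or_pos i
      · have := π.neg_val_le_disp ⟨0 + 1, hi⟩
        simp only at this
        omega
      · have hprev := ih (by omega) hi1 (by omega)
        have := congrArg Fin.val (π.eq_of_add_disp_eq (a := ⟨i, by omega⟩) (b := ⟨i + 1, hi⟩)
          (by rw [hprev, h]; push_cast; ring))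
        simp at this
    · exact h
    · exact absurd h (hne _ hi h1 hm)

theorem disp_eq_neg_two_of_disp_pred_ne (i : ℕ) (hi : i < n) (h2 : 2 ≤ i)
    (hik : (i : ℤ) < k + 2) (hprev : π.disp ⟨i - 1, by omega⟩ ≠ -1) :
    π.disp ⟨i, hi⟩ = -2 := by
  obtain ⟨a, ha⟩ := π.surjective ⟨i - 2, by omega⟩
  have hda : π.disp a = i - 2 - (a : ℕ) := by simp only [disp, ha]; omega
  rcases disp_eq_or hd a with h | h | h
  · have : a = ⟨i, hi⟩ := Fin.ext (show (a : ℕ) = i by omega)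
    rwa [← this]
  · have : a = ⟨i - 1, by omega⟩ := Fin.ext (show (a : ℕ) = i - 1 by omega)
    exact absurd (this ▸ h) hprev
  · omega

theorem disp_eq_neg_two_of_disp_eq (r : ℕ) (hr2 : 2 ≤ r) (hrn : r - 1 < n)
    (hr : π.disp ⟨r - 1, hrn⟩ = k) (hk : k ≠ -1) :
    ∀ i (hi : i < n), r ≤ i → (i : ℤ) < k + 2 → π.disp ⟨i, hi⟩ = -2 := by
  intro i hi hri
  induction i, hri using Nat.le_induction with
  | base => exact fun hik ↦ disp_eq_neg_two_of_disp_pred_ne hd r hi hr2 hik (by rwa [hr])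
  | succ i hri ih =>
    intro hik
    refine disp_eq_neg_two_of_disp_pred_ne hd (i + 1) hi (by omega) hik ?_
    simp only [Nat.add_sub_cancel, ih (by omega) (by omega)]
    norm_num

end Equiv.Perm

/-- Structure lemma for permutations with displacements in `{−2, −1, j−2}`.
Positions are `1`-indexed in the informal statement; here position `p` corresponds
to the index `p - 1` of `Fin n`. If `r > 1` is the smallest (1-indexed) position
with displacement `j − 2`, then `r ≤ j`, displacements at positions `2,…,r−1`
(indices `1,…,r−2`) are all `−1`, and displacements at positions `r+1,…,j`
(indices `r,…,j−1`) are all `−2`. -/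
theorem stmt7 (n j : ℕ) (hj : 3 ≤ j) (π : Equiv.Perm (Fin n))
    (hd : ∀ i : Fin n,
      (((π i : Fin n) : ℕ) : ℤ) - ((i : ℕ) : ℤ) ∈ ({-2, -1, (j : ℤ) - 2} : Set ℤ))
    (r : ℕ) (hr2 : 2 ≤ r) (hrn : r - 1 < n)
    (hr : (((π ⟨r - 1, hrn⟩ : Fin n) : ℕ) : ℤ) - ((r - 1 : ℕ) : ℤ) = (j : ℤ) - 2)
    (hmin : ∀ i (hi : i < n), 1 ≤ i → i < r - 1 →
      (((π ⟨i, hi⟩ : Fin n) : ℕ) : ℤ) - (i : ℤ) ≠ (j : ℤ) - 2) :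
    r ≤ j ∧
    (∀ i (hi : i < n), 1 ≤ i → i ≤ r - 2 →
      (((π ⟨i, hi⟩ : Fin n) : ℕ) : ℤ) - (i : ℤ) = -1) ∧
    (∀ i (hi : i < n), r ≤ i → i ≤ j - 1 →
      (((π ⟨i, hi⟩ : Fin n) : ℕ) : ℤ) - (i : ℤ) = -2) := by
  replace hd : ∀ i, π.disp i ∈ ({-2, -1, (j : ℤ) - 2} : Set ℤ) := hd
  have hbefore := Equiv.Perm.disp_eq_neg_one_of_forall_ne hd (r - 2)
    fun i hi h1 h2 ↦ hmin i hi h1 (by omega)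
  have hrj : r ≤ j := by
    by_contra! hjr
    exact Equiv.Perm.val_ne_of_disp_eq_neg_one hd
      (hbefore (j - 1) (by omega) (by omega) (by omega)) (by simp only; omega)
  refine ⟨hrj, hbefore, fun i hi hri hij ↦ ?_⟩
  exact Equiv.Perm.disp_eq_neg_two_of_disp_eq hd r hr2 hrn hr (by omega) i hi hri (by omega)
end

section
/- For j ≥ 2 and n > j, there is a bijection between the set of pairs (λ, μ) of compositions of n into parts from {1, j} with λ_1 = j, μ_1 = 1, and PS(λ) ∩ PS(μ) = {n}, and the set of permutations π of {1,...,n−1} all of whose displacements π(i) − i lie in {−2, −1, j−2}. -/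
namespace Meander

-- `marks 0 l` lists `{0} ∪ PSums l` in increasing order
def marks (s : ℕ) (l : List ℕ) : List ℕ := l.scanl (· + ·) s

def nextMark : List ℕ → ℕ → ℕ → ℕ
  | [], _, _ => 0
  | p :: t, s, y => if y < s + p then s + p else nextMark t (s + p) y

section Marks

variable {l : List ℕ} {s y z : ℕ}

@[simp] lemma mem_marks_nil : y ∈ marks s [] ↔ y = s := by simp [marks]

@[simp] lemma mem_marks_cons {p : ℕ} {t : List ℕ} :
    y ∈ marks s (p :: t) ↔ y = s ∨ y ∈ marks (s + p) t := by
  simp [marks, List.scanl_cons]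

lemma self_mem_marks : s ∈ marks s l := by cases l <;> simp

lemma add_sum_mem_marks : s + l.sum ∈ marks s l := by
  induction l generalizing s with
  | nil => simp
  | cons p t ih => simpa [Nat.add_assoc] using Or.inr (ih (s := s + p))

lemma le_of_mem_marks (h : y ∈ marks s l) : s ≤ y ∧ y ≤ s + l.sum := by
  induction l generalizing s with
  | nil => simp_all
  | cons p t ih =>
    rcases mem_marks_cons.mp h with rfl | h
    · simp
    · have := ih h; simp only [List.sum_cons]; omega

lemma mem_marks_zero_iff : y ∈ marks 0 l ↔ ∃ k ≤ l.length, (l.take k).sum = y := by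
  simp only [marks, List.mem_iff_getElem, List.getElem_scanl, List.length_scanl, Nat.lt_succ_iff,
    ← List.sum_eq_foldl, exists_prop]

lemma mem_PSums_iff (hpos : ∀ x ∈ l, 0 < x) : y ∈ PSums l ↔ y ∈ marks 0 l ∧ 0 < y := by
  rw [mem_marks_zero_iff]
  constructor
  · rintro ⟨k, hk, hkl, rfl⟩
    refine ⟨⟨k, hkl, rfl⟩, List.sum_pos _ (fun x hx => hpos x (List.mem_of_mem_take hx)) ?_⟩
    rw [Ne, List.take_eq_nil_iff, not_or]
    exact ⟨by omega, by rintro rfl; simp at hkl; omega⟩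
  · rintro ⟨⟨k, hkl, rfl⟩, hy⟩
    refine ⟨k, Nat.pos_of_ne_zero ?_, hkl, rfl⟩
    rintro rfl
    simp at hy

lemma lt_nextMark (hsy : s ≤ y) (hy : y < s + l.sum) : y < nextMark l s y := by
  induction l generalizing s with
  | nil => simp at hy; omega
  | cons p t ih =>
    simp only [nextMark]
    split_ifs with h
    · exact h
    · exact ih (by omega) (by simp only [List.sum_cons] at hy; omega)

lemma nextMark_mem_marks (hsy : s ≤ y) (hy : y < s + l.sum) : nextMark l s y ∈ marks s l := by
  induction l generalizing s with
  | nil => simp at hy; omega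
  | cons p t ih =>
    simp only [nextMark]
    split_ifs with h
    · simp [self_mem_marks]
    · exact mem_marks_cons.mpr (Or.inr (ih (by omega) (by simp only [List.sum_cons] at hy; omega)))

lemma nextMark_le (hsy : s ≤ y) (hz : z ∈ marks s l) (hyz : y < z) : nextMark l s y ≤ z := by
  induction l generalizing s with
  | nil => simp at hz; omega
  | cons p t ih =>
    simp only [nextMark]
    rcases mem_marks_cons.mp hz with rfl | hz
    · omega
    · split_ifs with h
      · exact (le_of_mem_marks hz).1
      · exact ih (by omega) hz

lemma exists_nextMark_eq_add (hy : y ∈ marks s l) (hlt : y < s + l.sum) :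
    ∃ p ∈ l, nextMark l s y = y + p := by
  induction l generalizing s with
  | nil => simp_all
  | cons p t ih =>
    have hsy := (le_of_mem_marks hy).1
    simp only [nextMark, List.mem_cons]
    split_ifs with h
    · obtain rfl : y = s := by
        rcases mem_marks_cons.mp hy with rfl | hy
        · rfl
        · have := (le_of_mem_marks hy).1; omega
      exact ⟨p, Or.inl rfl, rfl⟩
    · have hy' : y ∈ marks (s + p) t := by
        rcases mem_marks_cons.mp hy with rfl | hy
        · obtain rfl : p = 0 := by omega
          exact self_mem_marks
        · exact hy
      obtain ⟨q, hq, hq'⟩ := ih hy' (by simp only [List.sum_cons] at hlt; omega)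
      exact ⟨q, Or.inr hq, hq'⟩

lemma exists_nextMark_eq (hz : z ∈ marks s l) (hsz : s < z) :
    ∃ y ∈ marks s l, y < z ∧ nextMark l s y = z := by
  induction l generalizing s with
  | nil => simp at hz; omega
  | cons p t ih =>
    rcases mem_marks_cons.mp hz with rfl | hz
    · omega
    · have := (le_of_mem_marks hz).1
      by_cases hzp : z = s + p
      · exact ⟨s, self_mem_marks, by omega, by simp [nextMark, hzp]; omega⟩
      · obtain ⟨y, hy, hyz, rfl⟩ := ih hz (by omega)
        have := (le_of_mem_marks hy).1
        exact ⟨y, mem_marks_cons.mpr (Or.inr hy), hyz, by simp [nextMark]; omega⟩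

lemma eq_of_nextMark_eq {y₁ y₂ : ℕ} (h₁ : y₁ ∈ marks s l) (h₂ : y₂ ∈ marks s l)
    (hlt₁ : y₁ < s + l.sum) (hlt₂ : y₂ < s + l.sum)
    (h : nextMark l s y₁ = nextMark l s y₂) : y₁ = y₂ := by
  by_contra hne
  rcases Nat.lt_or_gt_of_ne hne with hlt | hlt
  · have := nextMark_le (le_of_mem_marks h₁).1 h₂ hlt
    have := lt_nextMark (le_of_mem_marks h₂).1 hlt₂
    omega
  · have := nextMark_le (le_of_mem_marks h₂).1 h₁ hlt
    have := lt_nextMark (le_of_mem_marks h₁).1 hlt₁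
    omega

lemma PSums_inter_eq_singleton_iff {l' : List ℕ} {n : ℕ} (hpos : ∀ x ∈ l, 0 < x)
    (hpos' : ∀ x ∈ l', 0 < x) (hsum : l.sum = n) (hsum' : l'.sum = n) (hn : 0 < n) :
    PSums l ∩ PSums l' = {n} ↔ ∀ y ∈ marks 0 l, y ∈ marks 0 l' → y = 0 ∨ y = n := by
  simp only [Set.ext_iff, Set.mem_inter_iff, Set.mem_singleton_iff, mem_PSums_iff hpos,
    mem_PSums_iff hpos']
  constructor
  · intro h y hy hy'
    by_cases hy0 : y = 0
    · exact Or.inl hy0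
    · exact Or.inr ((h y).mp ⟨⟨hy, by omega⟩, hy', by omega⟩)
  · intro h y
    constructor
    · rintro ⟨⟨hy, hy0⟩, hy', -⟩
      exact (h y hy hy').resolve_left (by omega)
    · rintro rfl
      have := add_sum_mem_marks (s := 0) (l := l)
      have := add_sum_mem_marks (s := 0) (l := l')
      simp_all

lemma nextMark_eq_add_one_or_add {j : ℕ} (hparts : ∀ x ∈ l, x = 1 ∨ x = j)
    (hy : y ∈ marks s l) (hlt : y < s + l.sum) :
    nextMark l s y = y + 1 ∨ nextMark l s y = y + j := by
  obtain ⟨p, hp, h⟩ := exists_nextMark_eq_add hy hlt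
  rcases hparts p hp with rfl | rfl <;> simp [h]

end Marks

lemma pos_of_parts {l : List ℕ} {j : ℕ} (hj : 1 ≤ j) (hparts : ∀ x ∈ l, x = 1 ∨ x = j) :
    ∀ x ∈ l, 0 < x := fun x hx => by rcases hparts x hx with rfl | rfl <;> omega

structure IsMeander (n j : ℕ) (lam mu : List ℕ) : Prop where
  parts_lam : ∀ x ∈ lam, x = 1 ∨ x = j
  parts_mu : ∀ x ∈ mu, x = 1 ∨ x = j
  sum_lam : lam.sum = n
  sum_mu : mu.sum = n
  head_lam : lam.head? = some j
  head_mu : mu.head? = some 1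
  inter : PSums lam ∩ PSums mu = {n}

def meanderSucc (lam mu : List ℕ) (y : ℕ) : ℕ :=
  if y ∈ marks 0 lam then nextMark lam 0 y else if y ∈ marks 0 mu then nextMark mu 0 y else y

namespace IsMeander

variable {n j y : ℕ} {lam mu : List ℕ} (hP : IsMeander n j lam mu)
include hP

lemma marks_inter (hj : 1 ≤ j) (hn : 0 < n) (h : y ∈ marks 0 lam) (h' : y ∈ marks 0 mu) :
    y = 0 ∨ y = n :=
  (PSums_inter_eq_singleton_iff (pos_of_parts hj hP.parts_lam) (pos_of_parts hj hP.parts_mu)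
    hP.sum_lam hP.sum_mu hn).mp hP.inter y h h'

lemma nextMark_lam_zero (hj : 1 ≤ j) : nextMark lam 0 0 = j := by
  obtain ⟨t, rfl⟩ : ∃ t, lam = j :: t := ⟨lam.tail, List.eq_cons_of_mem_head? hP.head_lam⟩
  simp [nextMark]
  omega

lemma one_mem_marks_mu : 1 ∈ marks 0 mu := by
  obtain ⟨t, rfl⟩ : ∃ t, mu = 1 :: t := ⟨mu.tail, List.eq_cons_of_mem_head? hP.head_mu⟩
  simp [self_mem_marks]

lemma meanderSucc_step (hy : y + 2 ≤ n) :
    meanderSucc lam mu y = y ∨ meanderSucc lam mu y = y + 1 ∨ meanderSucc lam mu y = y + j := by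
  unfold meanderSucc
  split_ifs with hA hB
  · exact Or.inr (nextMark_eq_add_one_or_add hP.parts_lam hA (by rw [hP.sum_lam]; omega))
  · exact Or.inr (nextMark_eq_add_one_or_add hP.parts_mu hB (by rw [hP.sum_mu]; omega))
  · exact Or.inl rfl

lemma mapsTo_meanderSucc (hj : 2 ≤ j) :
    Set.MapsTo (meanderSucc lam mu) {y | y + 2 ≤ n} (Set.Icc 2 n) := by
  intro y (hy : y + 2 ≤ n)
  have h0 : 0 ∈ marks 0 lam := self_mem_marks
  have h1 := hP.one_mem_marks_mu
  have := hP.sum_lam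
  have := hP.sum_mu
  unfold meanderSucc
  split_ifs with hA hB
  · have hlt : y < 0 + lam.sum := by omega
    have := lt_nextMark (Nat.zero_le y) hlt
    have := (le_of_mem_marks (nextMark_mem_marks (Nat.zero_le y) hlt)).2
    rcases Nat.eq_zero_or_pos y with rfl | hy0
    · have := hP.nextMark_lam_zero (by omega)
      exact ⟨by omega, by omega⟩
    · exact ⟨by omega, by omega⟩
  · have hlt : y < 0 + mu.sum := by omega
    have := lt_nextMark (Nat.zero_le y) hlt
    have := (le_of_mem_marks (nextMark_mem_marks (Nat.zero_le y) hlt)).2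
    have : y ≠ 0 := by rintro rfl; exact hA h0
    exact ⟨by omega, by omega⟩
  · have : y ≠ 0 := by rintro rfl; exact hA h0
    have : y ≠ 1 := by rintro rfl; exact hB h1
    exact ⟨by omega, by omega⟩

lemma injOn_meanderSucc (hj : 1 ≤ j) :
    Set.InjOn (meanderSucc lam mu) {y | y + 2 ≤ n} := by
  intro y₁ (hy₁ : y₁ + 2 ≤ n) y₂ (hy₂ : y₂ + 2 ≤ n) h
  have hlam : ∀ {y}, y + 2 ≤ n → y < 0 + lam.sum := fun _ => by rw [hP.sum_lam]; omega
  have hmu : ∀ {y}, y + 2 ≤ n → y < 0 + mu.sum := fun _ => by rw [hP.sum_mu]; omega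
  -- a λ-step and a μ-step can only land on a common mark at `n`, and both come from `n - j`
  have cross : ∀ {y y'}, y ∈ marks 0 lam → y' ∈ marks 0 mu → y + 2 ≤ n → y' + 2 ≤ n →
      nextMark lam 0 y = nextMark mu 0 y' → y = y' := by
    intro y y' hy hy' h h' heq
    have hw := hP.marks_inter hj (by omega) (nextMark_mem_marks (Nat.zero_le y) (hlam h))
      (heq ▸ nextMark_mem_marks (Nat.zero_le y') (hmu h'))
    have := lt_nextMark (Nat.zero_le y) (hlam h)
    rcases nextMark_eq_add_one_or_add hP.parts_lam hy (hlam h) with h1 | h1 <;>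
    rcases nextMark_eq_add_one_or_add hP.parts_mu hy' (hmu h') with h2 | h2 <;> omega
  unfold meanderSucc at h
  split_ifs at h with hA₁ hA₂ hB₂ hB₁ hA₂ hB₂ hA₂ hB₂
  · exact eq_of_nextMark_eq hA₁ hA₂ (hlam hy₁) (hlam hy₂) h
  · exact cross hA₁ hB₂ hy₁ hy₂ h
  · exact absurd (h ▸ nextMark_mem_marks (Nat.zero_le _) (hlam hy₁)) hA₂
  · exact (cross hA₂ hB₁ hy₂ hy₁ h.symm).symm
  · exact eq_of_nextMark_eq hB₁ hB₂ (hmu hy₁) (hmu hy₂) h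
  · exact absurd (h ▸ nextMark_mem_marks (Nat.zero_le _) (hmu hy₁)) hB₂
  · exact absurd (h ▸ nextMark_mem_marks (Nat.zero_le _) (hlam hy₂)) hA₁
  · exact absurd (h ▸ nextMark_mem_marks (Nat.zero_le _) (hmu hy₂)) hB₁
  · exact h

end IsMeander

structure IsStepBijection (n j : ℕ) (N : ℕ → ℕ) : Prop where
  bijOn : Set.BijOn N {y | y + 2 ≤ n} (Set.Icc 2 n)
  step : ∀ y, y + 2 ≤ n → N y = y ∨ N y = y + 1 ∨ N y = y + j

def orbitGaps (N : ℕ → ℕ) (n y : ℕ) : List ℕ :=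
  if y + 1 = n then [1]
  else if y < N y ∧ N y < n then (N y - y) :: orbitGaps N n (N y)
  -- for a step bijection this branch is only reached by the final step, onto `n`
  else [N y - y]
termination_by n - y

lemma orbitGaps_eq {N : ℕ → ℕ} {n s : ℕ} {l : List ℕ} (hpos : ∀ x ∈ l, 0 < x) (hl : l ≠ [])
    (hsum : s + l.sum = n) (hN : ∀ z ∈ marks s l, z + 2 ≤ n → N z = nextMark l s z) :
    orbitGaps N n s = l := by
  induction l generalizing s with
  | nil => contradiction
  | cons p t ih =>
    have hp := hpos p (by simp)
    have htpos : ∀ x ∈ t, 0 < x := fun x hx => hpos x (by simp [hx])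
    have ht : t.sum = 0 → t = [] := fun h => List.eq_nil_iff_forall_not_mem.mpr fun x hx => by
      have := List.sum_eq_zero_iff.mp h x hx; have := htpos x hx; omega
    simp only [List.sum_cons] at hsum
    rw [orbitGaps]
    by_cases hs : s + 1 = n
    · rw [if_pos hs, ht (by omega), show p = 1 by omega]
    have hNs : N s = s + p := by simp [hN s self_mem_marks (by omega), nextMark, hp]
    rw [if_neg hs, hNs]
    split_ifs with hlt
    · have htne : t ≠ [] := by rintro rfl; simp at hsum; omega
      rw [Nat.add_sub_cancel_left, ih htpos htne (by omega)]
      intro z hz hz2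
      have := (le_of_mem_marks hz).1
      rw [hN z (mem_marks_cons.mpr (Or.inr hz)) hz2, nextMark, if_neg (by omega)]
    · rw [Nat.add_sub_cancel_left, ht (by omega)]

lemma head?_orbitGaps {N : ℕ → ℕ} {n y : ℕ} (hy : y + 2 ≤ n) :
    (orbitGaps N n y).head? = some (N y - y) := by
  rw [orbitGaps, if_neg (by omega)]
  split_ifs <;> rfl

namespace IsMeander

variable {n j : ℕ} {lam mu : List ℕ} {N : ℕ → ℕ} (hP : IsMeander n j lam mu)
include hP

lemma orbitGaps_zero (hj : 1 ≤ j) (hN : Set.EqOn N (meanderSucc lam mu) {y | y + 2 ≤ n}) :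
    orbitGaps N n 0 = lam := by
  refine orbitGaps_eq (pos_of_parts hj hP.parts_lam) ?_ (by simp [hP.sum_lam]) fun z hz hz2 => ?_
  · rintro rfl; simpa using hP.head_lam
  · rw [hN hz2, meanderSucc, if_pos hz]

lemma cons_orbitGaps_one (hj : 1 ≤ j) (hn : 1 < n)
    (hN : Set.EqOn N (meanderSucc lam mu) {y | y + 2 ≤ n}) :
    1 :: orbitGaps N n 1 = mu := by
  obtain ⟨t, rfl⟩ : ∃ t, mu = 1 :: t := ⟨mu.tail, List.eq_cons_of_mem_head? hP.head_mu⟩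
  have hsum := hP.sum_mu
  simp only [List.sum_cons] at hsum
  refine congrArg _ (orbitGaps_eq (fun x hx => pos_of_parts hj hP.parts_mu x (by simp [hx]))
    ?_ (by omega) fun z hz hz2 => ?_)
  · rintro rfl; simp at hsum; omega
  have hz1 := (le_of_mem_marks hz).1
  have hzmu : z ∈ marks 0 (1 :: t) := by simpa using Or.inr hz
  have hzlam : z ∉ marks 0 lam := fun h => by
    rcases hP.marks_inter hj (by omega) h hzmu with h | h <;> omega
  rw [hN hz2, meanderSucc, if_neg hzlam, if_pos hzmu, nextMark, if_neg (by omega), zero_add]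

end IsMeander

namespace IsStepBijection

variable {n j y z : ℕ} {N : ℕ → ℕ} (hN : IsStepBijection n j N)
include hN

lemma two_le_apply (hy : y + 2 ≤ n) : 2 ≤ N y := (hN.bijOn.mapsTo hy).1

lemma apply_le (hy : y + 2 ≤ n) : N y ≤ n := (hN.bijOn.mapsTo hy).2

lemma lt_apply_apply (hy : y + 2 ≤ n) (hlt : y < N y) (hNy : N y + 2 ≤ n) : N y < N (N y) := by
  have hne : N (N y) ≠ N y := fun h => by have := hN.bijOn.injOn hNy hy h; omega
  rcases hN.step (N y) hNy with h | h | h <;> omega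

lemma sum_orbitGaps (hy : y < n) (hlt : y + 2 ≤ n → y < N y) : (orbitGaps N n y).sum = n - y := by
  fun_induction orbitGaps N n y with
  | case1 y h => simp; omega
  | case2 y h1 h2 ih =>
    have := ih h2.2 (hN.lt_apply_apply (by omega) h2.1)
    simp only [List.sum_cons]
    omega
  | case3 y h1 h2 =>
    have := hN.apply_le (y := y) (by omega)
    simp only [List.sum_cons, List.sum_nil]
    omega

lemma apply_sub_self_eq_one_or (hy : y + 2 ≤ n) (hlt : y < N y) : N y - y = 1 ∨ N y - y = j := by
  rcases hN.step y hy with h | h | h <;> omega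

lemma parts_orbitGaps (hy : y < n) (hlt : y + 2 ≤ n → y < N y) :
    ∀ x ∈ orbitGaps N n y, x = 1 ∨ x = j := by
  fun_induction orbitGaps N n y with
  | case1 y h => simp
  | case2 y h1 h2 ih =>
    simp only [List.mem_cons, forall_eq_or_imp]
    exact ⟨hN.apply_sub_self_eq_one_or (by omega) h2.1, ih h2.2 (hN.lt_apply_apply (by omega) h2.1)⟩
  | case3 y h1 h2 => simpa using hN.apply_sub_self_eq_one_or (by omega) (hlt (by omega))

lemma nextMark_orbitGaps (hy : y < n) (hlt : y + 2 ≤ n → y < N y)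
    (hz : z ∈ marks y (orbitGaps N n y)) (hz2 : z + 2 ≤ n) :
    nextMark (orbitGaps N n y) y z = N z := by
  fun_induction orbitGaps N n y with
  | case1 y h => simp at hz; omega
  | case2 y h1 h2 ih =>
    rw [mem_marks_cons, Nat.add_sub_cancel' h2.1.le] at hz
    simp only [nextMark, Nat.add_sub_cancel' h2.1.le]
    rcases hz with rfl | hz
    · simp [h2.1]
    · have := (le_of_mem_marks hz).1
      rw [if_neg (by omega)]
      exact ih h2.2 (hN.lt_apply_apply (by omega) h2.1) hz
  | case3 y h1 h2 =>
    have hlt' := hlt (by omega)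
    have := hN.apply_le (y := y) (by omega)
    simp only [mem_marks_cons, mem_marks_nil] at hz
    rcases hz with rfl | rfl
    · simp [nextMark, hlt']; omega
    · omega

lemma apply_mem_marks_orbitGaps (hy : y < n) (hlt : y + 2 ≤ n → y < N y)
    (hz : z ∈ marks y (orbitGaps N n y)) (hz2 : z + 2 ≤ n) : N z ∈ marks y (orbitGaps N n y) := by
  have hzy := (le_of_mem_marks hz).1
  rw [← hN.nextMark_orbitGaps hy hlt hz hz2]
  exact nextMark_mem_marks hzy (by rw [hN.sum_orbitGaps hy hlt]; omega)

lemma exists_apply_eq_of_mem_marks (hy : y < n) (hlt : y + 2 ≤ n → y < N y)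
    (hz : z ∈ marks y (orbitGaps N n y)) (hyz : y < z) (hzn : z < n) :
    ∃ p ∈ marks y (orbitGaps N n y), p < z ∧ N p = z := by
  obtain ⟨p, hp, hpz, hnext⟩ := exists_nextMark_eq hz hyz
  exact ⟨p, hp, hpz, hnext ▸ (hN.nextMark_orbitGaps hy hlt hp (by omega)).symm⟩

lemma zero_lt_apply_zero : 0 + 2 ≤ n → 0 < N 0 := fun h => by
  have := hN.two_le_apply h; omega

lemma one_lt_apply_one : 1 + 2 ≤ n → 1 < N 1 := fun h => by
  have := hN.two_le_apply h; omega

lemma marks_orbitGaps_disjoint (hzn : z < n)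
    (hz₀ : z ∈ marks 0 (orbitGaps N n 0)) (hz₁ : z ∈ marks 1 (orbitGaps N n 1)) : False := by
  induction z using Nat.strong_induction_on with
  | _ z ih =>
  obtain ⟨p, hp, hpz, hNp⟩ := hN.exists_apply_eq_of_mem_marks (by omega) hN.zero_lt_apply_zero
    hz₀ (by have := (le_of_mem_marks hz₁).1; omega) hzn
  have := hN.two_le_apply (y := p) (by omega)
  obtain ⟨p', hp', hpz', hNp'⟩ := hN.exists_apply_eq_of_mem_marks (by omega)
    hN.one_lt_apply_one hz₁ (by omega) hzn
  obtain rfl := hN.bijOn.injOn (show p + 2 ≤ n by omega) (show p' + 2 ≤ n by omega)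
    (hNp.trans hNp'.symm)
  exact ih p hpz (by omega) hp hp'

lemma apply_eq_self_of_not_mem_marks (hz2 : z + 2 ≤ n)
    (hz₀ : z ∉ marks 0 (orbitGaps N n 0)) (hz₁ : z ∉ marks 1 (orbitGaps N n 1)) : N z = z := by
  induction z using Nat.strong_induction_on with
  | _ z ih =>
  have hz0 : z ≠ 0 := by rintro rfl; exact hz₀ self_mem_marks
  have hz1 : z ≠ 1 := by rintro rfl; exact hz₁ self_mem_marks
  obtain ⟨y, hy : y + 2 ≤ n, hyz⟩ := hN.bijOn.surjOn (show z ∈ Set.Icc 2 n by constructor <;> omega)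
  by_contra hne
  have hy_lt : y < z := by
    have : y ≠ z := by rintro rfl; exact hne hyz
    rcases hN.step y hy with h | h | h <;> omega
  have hy₀ : y ∉ marks 0 (orbitGaps N n 0) := fun h =>
    hz₀ (hyz ▸ hN.apply_mem_marks_orbitGaps (by omega) hN.zero_lt_apply_zero h hy)
  have hy₁ : y ∉ marks 1 (orbitGaps N n 1) := fun h =>
    hz₁ (hyz ▸ hN.apply_mem_marks_orbitGaps (by omega) hN.one_lt_apply_one h hy)
  have := ih y hy_lt hy hy₀ hy₁
  omega

lemma isMeander (hj : 2 ≤ j) (hn : j < n) :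
    IsMeander n j (orbitGaps N n 0) (1 :: orbitGaps N n 1) := by
  have hsum₀ := hN.sum_orbitGaps (by omega) hN.zero_lt_apply_zero
  have hsum₁ := hN.sum_orbitGaps (by omega) hN.one_lt_apply_one
  have hparts₀ := hN.parts_orbitGaps (by omega) hN.zero_lt_apply_zero
  have hparts₁ : ∀ x ∈ 1 :: orbitGaps N n 1, x = 1 ∨ x = j := by
    simpa using hN.parts_orbitGaps (by omega) hN.one_lt_apply_one
  have hN0 : N 0 = j := by
    have := hN.two_le_apply (y := 0) (by omega)
    rcases hN.step 0 (by omega) with h | h | h <;> omega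
  refine ⟨hparts₀, hparts₁, by simpa using hsum₀, by simp [hsum₁]; omega,
    by simp [head?_orbitGaps (show 0 + 2 ≤ n by omega), hN0], rfl, ?_⟩
  refine (PSums_inter_eq_singleton_iff (pos_of_parts (by omega) hparts₀)
    (pos_of_parts (by omega) hparts₁) (by simpa using hsum₀) (by simp [hsum₁]; omega)
    (by omega)).mpr fun y hy₀ hy => ?_
  simp only [mem_marks_cons, zero_add] at hy
  rcases hy with rfl | hy₁
  · exact Or.inl rfl
  · by_contra hne
    have := (le_of_mem_marks hy₀).2
    exact hN.marks_orbitGaps_disjoint (by rw [zero_add, hsum₀] at this; omega) hy₀ hy₁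

lemma eqOn_meanderSucc :
    Set.EqOn (meanderSucc (orbitGaps N n 0) (1 :: orbitGaps N n 1)) N {y | y + 2 ≤ n} := by
  intro z (hz2 : z + 2 ≤ n)
  unfold meanderSucc
  simp only [mem_marks_cons, zero_add]
  split_ifs with h₀ h₁
  · exact hN.nextMark_orbitGaps (by omega) hN.zero_lt_apply_zero h₀ hz2
  · obtain h₁ := h₁.resolve_left fun h => h₀ (h ▸ self_mem_marks)
    have := (le_of_mem_marks h₁).1
    rw [nextMark, if_neg (by omega), zero_add]
    exact hN.nextMark_orbitGaps (by omega) hN.one_lt_apply_one h₁ hz2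
  · exact (hN.apply_eq_self_of_not_mem_marks hz2 h₀ (not_or.mp h₁).2).symm

end IsStepBijection

section Shift

variable {n j : ℕ}

lemma displacement_mem_iff {a b : ℕ} :
    (a : ℤ) - b ∈ ({-2, -1, (j : ℤ) - 2} : Set ℤ) ↔ a + 2 = b ∨ a + 2 = b + 1 ∨ a + 2 = b + j := by
  simp only [Set.mem_insert_iff, Set.mem_singleton_iff]
  omega

def shiftFun (π : Equiv.Perm (Fin (n - 1))) (y : ℕ) : ℕ :=
  if h : y < n - 1 then π ⟨y, h⟩ + 2 else y

lemma shiftFun_of_lt (π : Equiv.Perm (Fin (n - 1))) {y : ℕ} (h : y < n - 1) :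
    shiftFun π y = π ⟨y, h⟩ + 2 :=
  dif_pos h

lemma isStepBijection_shiftFun {π : Equiv.Perm (Fin (n - 1))}
    (hπ : ∀ i : Fin (n - 1), (((π i : Fin (n - 1)) : ℕ) : ℤ) - ((i : ℕ) : ℤ)
      ∈ ({-2, -1, (j : ℤ) - 2} : Set ℤ)) :
    IsStepBijection n j (shiftFun π) := by
  refine ⟨⟨fun y (hy : y + 2 ≤ n) => ?_, fun y (hy : y + 2 ≤ n) y' (hy' : y' + 2 ≤ n) h => ?_,
    fun w hw => ?_⟩, fun y (hy : y + 2 ≤ n) => ?_⟩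
  · have := (π ⟨y, by omega⟩).isLt
    rw [shiftFun_of_lt π (by omega)]
    exact ⟨by omega, by omega⟩
  · rw [shiftFun_of_lt π (by omega), shiftFun_of_lt π (by omega), add_left_inj, Fin.val_inj,
      π.apply_eq_iff_eq] at h
    exact congrArg Fin.val h
  · obtain ⟨hw2, hwn⟩ := hw
    refine ⟨π.symm ⟨w - 2, by omega⟩, by have := (π.symm ⟨w - 2, by omega⟩).isLt; simp; omega, ?_⟩
    rw [shiftFun_of_lt π (π.symm _).isLt]
    simp only [Fin.eta, Equiv.apply_symm_apply]
    omega
  · rw [shiftFun_of_lt π (by omega)]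
    have := displacement_mem_iff.mp (hπ ⟨y, by omega⟩)
    omega

variable {N : ℕ → ℕ} (hmaps : Set.MapsTo N {y | y + 2 ≤ n} (Set.Icc 2 n))
  (hinj : Set.InjOn N {y | y + 2 ≤ n})

noncomputable def shiftPerm : Equiv.Perm (Fin (n - 1)) :=
  Equiv.ofBijective (fun i => ⟨N i - 2, by
      have := i.isLt; have := (hmaps (show (i : ℕ) + 2 ≤ n by omega)).2; omega⟩)
    (Finite.injective_iff_bijective.mp fun i i' h => by
      have := (hmaps (show (i : ℕ) + 2 ≤ n by omega)).1
      have := (hmaps (show (i' : ℕ) + 2 ≤ n by omega)).1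
      exact Fin.ext (hinj (show (i : ℕ) + 2 ≤ n by omega) (show (i' : ℕ) + 2 ≤ n by omega)
        (by simp only [Fin.mk.injEq] at h; omega)))

variable {hmaps hinj}

lemma shiftPerm_apply (i : Fin (n - 1)) : (shiftPerm hmaps hinj i : ℕ) = N i - 2 := rfl

lemma displacement_shiftPerm (hstep : ∀ y, y + 2 ≤ n → N y = y ∨ N y = y + 1 ∨ N y = y + j)
    (i : Fin (n - 1)) :
    (((shiftPerm hmaps hinj i : Fin (n - 1)) : ℕ) : ℤ) - ((i : ℕ) : ℤ)
      ∈ ({-2, -1, (j : ℤ) - 2} : Set ℤ) := by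
  have hi : (i : ℕ) + 2 ≤ n := by omega
  have := (hmaps hi).1
  rw [displacement_mem_iff, shiftPerm_apply]
  rcases hstep i hi with h | h | h <;> omega

lemma eqOn_shiftFun_shiftPerm : Set.EqOn (shiftFun (shiftPerm hmaps hinj)) N {y | y + 2 ≤ n} := by
  intro y (hy : y + 2 ≤ n)
  have := (hmaps hy).1
  rw [shiftFun_of_lt _ (by omega), shiftPerm_apply, Fin.val_mk]
  omega

lemma shiftPerm_eq_of_eqOn {π : Equiv.Perm (Fin (n - 1))}
    (h : Set.EqOn N (shiftFun π) {y | y + 2 ≤ n}) : shiftPerm hmaps hinj = π := by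
  ext i
  rw [shiftPerm_apply, h (show (i : ℕ) + 2 ≤ n by omega), shiftFun_of_lt π i.isLt]
  simp

end Shift

lemma isMeander_iff {n j : ℕ} {lam mu : List ℕ} :
    IsMeander n j lam mu ↔
      (∀ x ∈ lam, x = 1 ∨ x = j) ∧ (∀ x ∈ mu, x = 1 ∨ x = j) ∧ lam.sum = n ∧ mu.sum = n ∧
        lam.head? = some j ∧ mu.head? = some 1 ∧ PSums lam ∩ PSums mu = {n} :=
  ⟨fun h => ⟨h.1, h.2, h.3, h.4, h.5, h.6, h.7⟩, fun ⟨h1, h2, h3, h4, h5, h6, h7⟩ =>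
    ⟨h1, h2, h3, h4, h5, h6, h7⟩⟩

noncomputable def meanderEquiv {n j : ℕ} (hj : 2 ≤ j) (hn : j < n) :
    {p : List ℕ × List ℕ // IsMeander n j p.1 p.2} ≃
      {π : Equiv.Perm (Fin (n - 1)) // ∀ i : Fin (n - 1),
        (((π i : Fin (n - 1)) : ℕ) : ℤ) - ((i : ℕ) : ℤ) ∈ ({-2, -1, (j : ℤ) - 2} : Set ℤ)} where
  toFun p := ⟨shiftPerm (p.2.mapsTo_meanderSucc hj) (p.2.injOn_meanderSucc (by omega)),
    displacement_shiftPerm fun _ => p.2.meanderSucc_step⟩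
  invFun π := ⟨(orbitGaps (shiftFun π.1) n 0, 1 :: orbitGaps (shiftFun π.1) n 1),
    (isStepBijection_shiftFun π.2).isMeander hj hn⟩
  left_inv p := by
    refine Subtype.ext (Prod.ext ?_ ?_) <;> dsimp only
    · exact p.2.orbitGaps_zero (by omega) eqOn_shiftFun_shiftPerm
    · exact p.2.cons_orbitGaps_one (by omega) (by omega) eqOn_shiftFun_shiftPerm
  right_inv π := by
    refine Subtype.ext ?_
    dsimp only
    exact shiftPerm_eq_of_eqOn ((isStepBijection_shiftFun π.2).eqOn_meanderSucc)

end Meander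

/-- For `j ≥ 2` and `n > j`, there is a bijection between indecomposable meanders
`(λ, μ)` on `n` nodes with parts in `{1, j}`, `λ₁ = j`, `μ₁ = 1`, and
`PS(λ) ∩ PS(μ) = {n}`, and permutations of `{1,…,n−1}` (modelled on `Fin (n-1)`)
all of whose displacements lie in `{−2, −1, j−2}`. -/
theorem stmt8 (n j : ℕ) (hj : 2 ≤ j) (hn : j < n) :
    Nonempty (
      {p : List ℕ × List ℕ //
        (∀ x ∈ p.1, x = 1 ∨ x = j) ∧ (∀ x ∈ p.2, x = 1 ∨ x = j) ∧
        p.1.sum = n ∧ p.2.sum = n ∧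
        p.1.head? = some j ∧ p.2.head? = some 1 ∧
        PSums p.1 ∩ PSums p.2 = {n}} ≃
      {π : Equiv.Perm (Fin (n - 1)) // ∀ i : Fin (n - 1),
        (((π i : Fin (n - 1)) : ℕ) : ℤ) - ((i : ℕ) : ℤ)
          ∈ ({-2, -1, (j : ℤ) - 2} : Set ℤ)}) :=
  ⟨(Equiv.subtypeEquivRight fun _ => Meander.isMeander_iff.symm).trans (Meander.meanderEquiv hj hn)⟩
end

section
/- For odd n = 2k+1 with n ≥ 9, the meander with top composition (n, 1^{k-4}, n, 1^{k-1}) and bottom composition (1^{k-1}, n, 1^{k-4}, n) contains a cycle, where 1^m denotes m consecutive parts equal to 1. -/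
/-! The positions `k - 1, k + 1, 3k - 3, 5k - 3, 5k - 5, 3k - 1`, in this cyclic order, are
joined alternately by upper and lower arcs: the two parts `2k + 1` of the top composition pair
`k - 1 ↔ k + 1`, `3k - 3 ↔ 5k - 3`, `5k - 5 ↔ 3k - 1`, those of the bottom one pair
`k + 1 ↔ 3k - 3`, `5k - 3 ↔ 5k - 5`, `3k - 1 ↔ k - 1`. A position lies on at most one upper and
one lower arc, so this hexagon is a whole connected component, and it is a cycle. -/

/-- `BlockArc l u v` holds when `u` and `v` (0-indexed positions) are joined by an
arc of the system of nested arcs determined by the composition `l`: the `i`-th part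
`p = l.getD i 0` occupies positions `a, …, a + p - 1` where `a = (l.take i).sum`,
and contributes arcs joining `a + t` and `a + (p - 1 - t)` for `2t + 1 < p`. -/
def BlockArc (l : List ℕ) (u v : ℕ) : Prop :=
  ∃ i < l.length, ∃ t : ℕ, 2 * t + 1 < l.getD i 0 ∧
    u = (l.take i).sum + t ∧ v = (l.take i).sum + (l.getD i 0 - 1 - t)

/-- The meander graph of the pair of compositions `(lam, mu)` on vertices
`0, …, n-1`: upper arcs from `lam`, lower arcs from `mu`. -/
def MeanderGraph (n : ℕ) (lam mu : List ℕ) : SimpleGraph (Fin n) :=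
  SimpleGraph.fromRel (fun u v => BlockArc lam (u : ℕ) (v : ℕ) ∨ BlockArc mu (u : ℕ) (v : ℕ))

/-- A position `v` is covered by (is an endpoint of) an arc of the composition `l`. -/
def Covered (l : List ℕ) (v : ℕ) : Prop :=
  ∃ u, BlockArc l u v ∨ BlockArc l v u

/-- A connected component of the meander graph is a cycle component when every one
of its vertices is covered by both an upper and a lower arc (i.e. has degree 2 in
the meander multigraph). -/
def IsCycleComp (n : ℕ) (lam mu : List ℕ)
    (c : (MeanderGraph n lam mu).ConnectedComponent) : Prop :=
  ∀ v : Fin n, (MeanderGraph n lam mu).connectedComponentMk v = c →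
    Covered lam (v : ℕ) ∧ Covered mu (v : ℕ)

/-- The number of cycles of the meander `(lam, mu)` on `n` nodes. -/
noncomputable def numCycles (n : ℕ) (lam mu : List ℕ) : ℕ :=
  {c : (MeanderGraph n lam mu).ConnectedComponent | IsCycleComp n lam mu c}.ncard

/-- The number of paths (including isolated vertices) of the meander `(lam, mu)`. -/
noncomputable def numPaths (n : ℕ) (lam mu : List ℕ) : ℕ :=
  {c : (MeanderGraph n lam mu).ConnectedComponent | ¬ IsCycleComp n lam mu c}.ncard

/-- The index of the meander `(lam, mu)` on `n` nodes:
twice the number of cycles plus the number of paths. -/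
noncomputable def meanderIndex (n : ℕ) (lam mu : List ℕ) : ℕ :=
  2 * numCycles n lam mu + numPaths n lam mu

theorem SimpleGraph.Reachable.mem_of_adj_closed {V : Type*} {G : SimpleGraph V} {S : Set V}
    (hS : ∀ u w, G.Adj u w → u ∈ S → w ∈ S) {u w : V} (h : G.Reachable u w) (hu : u ∈ S) :
    w ∈ S := by
  rw [reachable_iff_reflTransGen] at h
  induction h with
  | refl => exact hu
  | tail _ hadj ih => exact hS _ _ hadj ih

theorem not_blockArc_nil (u v : ℕ) : ¬ BlockArc [] u v := by
  rintro ⟨i, hi, -⟩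
  exact Nat.not_lt_zero i hi

theorem blockArc_cons_iff (p : ℕ) (l : List ℕ) (u v : ℕ) :
    BlockArc (p :: l) u v ↔
      (∃ t, 2 * t + 1 < p ∧ u = t ∧ v = p - 1 - t) ∨
        ∃ a b, BlockArc l a b ∧ u = p + a ∧ v = p + b := by
  constructor
  · rintro ⟨_ | j, hi, t, ht, rfl, rfl⟩
    · exact Or.inl ⟨t, by simpa using ht, by simp, by simp⟩
    · refine Or.inr ⟨_, _, ⟨j, by simpa using hi, t, ht, rfl, rfl⟩, ?_, ?_⟩ <;>
        simp [Nat.add_assoc]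
  · rintro (⟨t, ht, rfl, rfl⟩ | ⟨_, _, ⟨j, hj, t, ht, rfl, rfl⟩, rfl, rfl⟩)
    · exact ⟨0, by simp, _, ht, by simp, by simp⟩
    · exact ⟨j + 1, by simpa using hj, t, ht, by simp [Nat.add_assoc], by simp [Nat.add_assoc]⟩

theorem not_blockArc_replicate_one (m u v : ℕ) : ¬ BlockArc (List.replicate m 1) u v := by
  induction m generalizing u v with
  | zero => exact not_blockArc_nil u v
  | succ m ih =>
    rw [List.replicate_succ, blockArc_cons_iff]
    rintro (⟨t, ht, -⟩ | ⟨a, b, hab, -⟩)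
    · omega
    · exact ih a b hab

theorem blockArc_replicate_one_append_iff (m : ℕ) (l : List ℕ) (u v : ℕ) :
    BlockArc (List.replicate m 1 ++ l) u v ↔ ∃ a b, BlockArc l a b ∧ u = m + a ∧ v = m + b := by
  induction m generalizing u v with
  | zero => simp
  | succ m ih =>
    simp only [List.replicate_succ, List.cons_append, blockArc_cons_iff, ih]
    constructor
    · rintro (⟨t, ht, -⟩ | ⟨_, _, ⟨a, b, hab, rfl, rfl⟩, rfl, rfl⟩)
      · omega
      · exact ⟨a, b, hab, by omega, by omega⟩
    · rintro ⟨a, b, hab, rfl, rfl⟩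
      exact Or.inr ⟨m + a, m + b, ⟨a, b, hab, rfl, rfl⟩, by omega, by omega⟩

theorem blockArc_two_blocks_iff (a p b c u v : ℕ) :
    BlockArc (List.replicate a 1 ++ [p] ++ List.replicate b 1 ++ [p] ++ List.replicate c 1) u v ↔
      ∃ t, 2 * t + 1 < p ∧
        ((u = a + t ∧ v = a + (p - 1 - t)) ∨ (u = a + p + b + t ∧ v = a + p + b + (p - 1 - t))) := by
  simp only [List.append_assoc, List.cons_append, List.nil_append,
    blockArc_replicate_one_append_iff, blockArc_cons_iff, not_blockArc_replicate_one, false_and,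
    exists_false, or_false]
  constructor
  · rintro ⟨_, _, ⟨t, ht, rfl, rfl⟩ | ⟨_, _, ⟨_, _, ⟨t, ht, rfl, rfl⟩, rfl, rfl⟩, rfl, rfl⟩, rfl, rfl⟩
    · exact ⟨_, ht, Or.inl ⟨rfl, rfl⟩⟩
    · exact ⟨_, ht, Or.inr ⟨by omega, by omega⟩⟩
  · rintro ⟨t, ht, ⟨rfl, rfl⟩ | ⟨rfl, rfl⟩⟩
    · exact ⟨_, _, Or.inl ⟨t, ht, rfl, rfl⟩, rfl, rfl⟩
    · exact ⟨_, _, Or.inr ⟨_, _, ⟨_, _, ⟨t, ht, rfl, rfl⟩, rfl, rfl⟩, rfl, rfl⟩, by omega, by omega⟩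

theorem isCycleComp_of_adj_closed {n : ℕ} {lam mu : List ℕ} (S : Set (Fin n))
    (hclosed : ∀ u w, (MeanderGraph n lam mu).Adj u w → u ∈ S → w ∈ S)
    (hcovered : ∀ v ∈ S, Covered lam v ∧ Covered mu v) {v : Fin n} (hv : v ∈ S) :
    IsCycleComp n lam mu ((MeanderGraph n lam mu).connectedComponentMk v) := fun w hw =>
  hcovered w ((SimpleGraph.ConnectedComponent.exact hw).symm.mem_of_adj_closed hclosed hv)

def meanderTop (k : ℕ) : List ℕ :=
  [2 * k + 1] ++ List.replicate (k - 4) 1 ++ [2 * k + 1] ++ List.replicate (k - 1) 1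

def meanderBottom (k : ℕ) : List ℕ :=
  List.replicate (k - 1) 1 ++ [2 * k + 1] ++ List.replicate (k - 4) 1 ++ [2 * k + 1]

theorem blockArc_meanderTop_iff {k : ℕ} (hk : 4 ≤ k) (u v : ℕ) :
    BlockArc (meanderTop k) u v ↔
      ∃ t < k, (u = t ∧ v = 2 * k - t) ∨ (u = 3 * k - 3 + t ∧ v = 5 * k - 3 - t) := by
  have h := blockArc_two_blocks_iff 0 (2 * k + 1) (k - 4) (k - 1) u v
  rw [List.replicate_zero, List.nil_append] at h
  rw [meanderTop, h]
  constructor <;> rintro ⟨t, ht, h⟩ <;> exact ⟨t, by omega, by omega⟩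

theorem blockArc_meanderBottom_iff {k : ℕ} (hk : 4 ≤ k) (u v : ℕ) :
    BlockArc (meanderBottom k) u v ↔
      ∃ t < k, (u = k - 1 + t ∧ v = 3 * k - 1 - t) ∨ (u = 4 * k - 4 + t ∧ v = 6 * k - 4 - t) := by
  have h := blockArc_two_blocks_iff (k - 1) (2 * k + 1) (k - 4) 0 u v
  rw [List.replicate_zero, List.append_nil] at h
  rw [meanderBottom, h]
  constructor <;> rintro ⟨t, ht, h⟩ <;> exact ⟨t, by omega, by omega⟩

def hexagon (k : ℕ) : Set ℕ := {k - 1, k + 1, 3 * k - 3, 5 * k - 3, 5 * k - 5, 3 * k - 1}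

theorem hexagon_adj_closed {k : ℕ} (hk : 4 ≤ k) (u w : Fin (6 * k - 3))
    (huw : (MeanderGraph (6 * k - 3) (meanderTop k) (meanderBottom k)).Adj u w)
    (hu : (u : ℕ) ∈ hexagon k) : (w : ℕ) ∈ hexagon k := by
  simp only [hexagon, Set.mem_insert_iff, Set.mem_singleton_iff] at hu ⊢
  simp only [MeanderGraph, SimpleGraph.fromRel_adj, blockArc_meanderTop_iff hk,
    blockArc_meanderBottom_iff hk] at huw
  obtain ⟨-, (⟨t, ht, h⟩ | ⟨t, ht, h⟩) | (⟨t, ht, h⟩ | ⟨t, ht, h⟩)⟩ := huw <;> omega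

theorem hexagon_covered {k : ℕ} (hk : 4 ≤ k) {v : ℕ} (hv : v ∈ hexagon k) :
    Covered (meanderTop k) v ∧ Covered (meanderBottom k) v := by
  have top := blockArc_meanderTop_iff hk
  have bot := blockArc_meanderBottom_iff hk
  simp only [hexagon, Set.mem_insert_iff, Set.mem_singleton_iff] at hv
  rcases hv with rfl | rfl | rfl | rfl | rfl | rfl
  · exact ⟨⟨k + 1, .inr ((top _ _).2 ⟨k - 1, by omega, by omega⟩)⟩,
      ⟨3 * k - 1, .inr ((bot _ _).2 ⟨0, by omega, by omega⟩)⟩⟩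
  · exact ⟨⟨k - 1, .inl ((top _ _).2 ⟨k - 1, by omega, by omega⟩)⟩,
      ⟨3 * k - 3, .inr ((bot _ _).2 ⟨2, by omega, by omega⟩)⟩⟩
  · exact ⟨⟨5 * k - 3, .inr ((top _ _).2 ⟨0, by omega, by omega⟩)⟩,
      ⟨k + 1, .inl ((bot _ _).2 ⟨2, by omega, by omega⟩)⟩⟩
  · exact ⟨⟨3 * k - 3, .inl ((top _ _).2 ⟨0, by omega, by omega⟩)⟩,
      ⟨5 * k - 5, .inl ((bot _ _).2 ⟨k - 1, by omega, by omega⟩)⟩⟩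
  · exact ⟨⟨3 * k - 1, .inl ((top _ _).2 ⟨2, by omega, by omega⟩)⟩,
      ⟨5 * k - 3, .inr ((bot _ _).2 ⟨k - 1, by omega, by omega⟩)⟩⟩
  · exact ⟨⟨5 * k - 5, .inr ((top _ _).2 ⟨2, by omega, by omega⟩)⟩,
      ⟨k - 1, .inl ((bot _ _).2 ⟨0, by omega, by omega⟩)⟩⟩

/-- For odd `n = 2k+1` with `n ≥ 9` (i.e. `k ≥ 4`), the meander with top
composition `(n, 1^{k-4}, n, 1^{k-1})` and bottom composition
`(1^{k-1}, n, 1^{k-4}, n)` (both summing to `2n + 2k - 5 = 6k - 3`)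
contains a cycle. -/
theorem stmt13 (k : ℕ) (hk : 4 ≤ k) :
    ∃ c, IsCycleComp (6 * k - 3)
      ([2 * k + 1] ++ List.replicate (k - 4) 1 ++ [2 * k + 1] ++ List.replicate (k - 1) 1)
      (List.replicate (k - 1) 1 ++ [2 * k + 1] ++ List.replicate (k - 4) 1 ++ [2 * k + 1])
      c :=
  ⟨_, isCycleComp_of_adj_closed (lam := meanderTop k) (mu := meanderBottom k)
    {v | (v : ℕ) ∈ hexagon k} (hexagon_adj_closed hk) (fun _ => hexagon_covered hk)
    (v := ⟨k - 1, by omega⟩) (by simp [hexagon])⟩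
end

section
/- Every indecomposable meander on compositions with all parts in {1,2} and with n > 2 nodes is acyclic (its meander graph contains no cycles) and has index exactly 1 (it consists of a single path). -/

lemma sum_take_succ_getD (l : List ℕ) (i : ℕ) (h : i < l.length) :
    (l.take (i+1)).sum = (l.take i).sum + l.getD i 0 := by
  rw [List.sum_take_succ _ _ h]
  simp [List.getD_eq_getElem?_getD, List.getElem?_eq_getElem h]

/-- With parts in `{1,2}`, every arc joins two consecutive positions. -/
lemma blockArc_norm {l : List ℕ} (hl : ∀ x ∈ l, x = 1 ∨ x = 2) {u v : ℕ}
    (h : BlockArc l u v) :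
    ∃ i < l.length, l.getD i 0 = 2 ∧ u = (l.take i).sum ∧ v = u + 1 := by
  obtain ⟨i, hi, t, ht, hu, hv⟩ := h
  have hmem : l.getD i 0 ∈ l := by
    rw [List.getD_eq_getElem?_getD, List.getElem?_eq_getElem hi]
    exact List.getElem_mem hi
  have hp := hl _ hmem
  have hp2 : l.getD i 0 = 2 := by omega
  have ht0 : t = 0 := by omega
  exact ⟨i, hi, hp2, by omega, by omega⟩

/-- If `0 < m < l.sum` and `m` is not a partial sum, the arc `(m-1, m)` exists. -/
lemma exists_arc {l : List ℕ} (hl : ∀ x ∈ l, x = 1 ∨ x = 2) {m : ℕ} (h0 : 0 < m)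
    (hms : m < l.sum) (hns : m ∉ PSums l) : BlockArc l (m - 1) m := by
  induction l generalizing m with
  | nil => simp at hms
  | cons p rest ih =>
    have hp := hl p List.mem_cons_self
    by_cases hlt : m < p
    · have hp2 : p = 2 := by omega
      have hm1 : m = 1 := by omega
      refine ⟨0, by simp, 0, by simp [hp2], ?_, ?_⟩ <;> simp [hp2, hm1]
    · have hne : m ≠ p := by
        intro he
        exact hns ⟨1, by omega, by simp, by simp [he]⟩
      have hgt : p < m := by omega
      have h1 : m - p ∉ PSums rest := by
        rintro ⟨k, hk0, hkl, hks⟩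
        refine hns ⟨k + 1, by omega, by simp; omega, ?_⟩
        simp [List.take_succ_cons]
        omega
      have hsum : rest.sum = (p :: rest).sum - p := by simp
      obtain ⟨i, hi, t, ht, hu, hv⟩ := ih (fun x hx => hl x (List.mem_cons_of_mem _ hx))
        (by omega) (by simp at hms ⊢; omega) h1
      refine ⟨i + 1, by simp; omega, t, by simpa using ht, ?_, ?_⟩ <;>
        · simp [List.take_succ_cons] at hu hv ⊢
          omega

/-- If position `0` is covered, then `2` is a partial sum. -/
lemma two_mem_of_covered_zero {l : List ℕ} (hl : ∀ x ∈ l, x = 1 ∨ x = 2)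
    (h : Covered l 0) : 2 ∈ PSums l := by
  obtain ⟨u, h | h⟩ := h
  · obtain ⟨i, hi, hp2, hu, hv⟩ := blockArc_norm hl h
    omega
  · obtain ⟨i, hi, hp2, hu, hv⟩ := blockArc_norm hl h
    refine ⟨i + 1, by omega, by omega, ?_⟩
    rw [sum_take_succ_getD _ _ hi]
    omega

/-- Every indecomposable meander on `n > 2` nodes with all parts in `{1,2}` is
acyclic, and its index is exactly `1` (it is a single path). -/
theorem stmt15 (n : ℕ) (hn : 2 < n) (lam mu : List ℕ)
    (hl : ∀ x ∈ lam, x = 1 ∨ x = 2) (hm : ∀ x ∈ mu, x = 1 ∨ x = 2)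
    (hls : lam.sum = n) (hms : mu.sum = n)
    (hind : PSums lam ∩ PSums mu = {n}) :
    (¬ ∃ c, IsCycleComp n lam mu c) ∧ meanderIndex n lam mu = 1 := by
  set G := MeanderGraph n lam mu with hG
  have hpos : (0 : ℕ) < n := by omega
  -- every pair of consecutive vertices is adjacent
  have hadj : ∀ k : ℕ, ∀ hk : k + 1 < n,
      G.Adj ⟨k, by omega⟩ ⟨k + 1, hk⟩ := by
    intro k hk
    have hknot : (k + 1 : ℕ) ∉ PSums lam ∩ PSums mu := by
      rw [hind]
      intro hmem
      simp at hmem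
      omega
    have harc : BlockArc lam k (k + 1) ∨ BlockArc mu k (k + 1) := by
      by_cases hL : (k + 1) ∈ PSums lam
      · right
        have hM : (k + 1) ∉ PSums mu := fun hM => hknot ⟨hL, hM⟩
        have := exists_arc hm (m := k + 1) (by omega) (by omega) hM
        simpa using this
      · left
        have := exists_arc hl (m := k + 1) (by omega) (by omega) hL
        simpa using this
    refine ⟨?_, ?_⟩
    · intro he
      have : k = k + 1 := congrArg Fin.val he
      omega
    · left
      simpa using harc.imp id id
  -- reachability to vertex 0
  have hreach : ∀ k : ℕ, ∀ hk : k < n, G.Reachable ⟨k, hk⟩ ⟨0, hpos⟩ := by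
    intro k
    induction k with
    | zero => intro hk; exact SimpleGraph.Reachable.refl _
    | succ j ih =>
      intro hk
      have hj : j < n := by omega
      exact ((hadj j hk).symm.reachable).trans (ih hj)
  -- every component is the component of 0
  have hcomp : ∀ c : G.ConnectedComponent, c = G.connectedComponentMk ⟨0, hpos⟩ := by
    intro c
    induction c using SimpleGraph.ConnectedComponent.ind with
    | _ v => exact SimpleGraph.ConnectedComponent.sound (hreach v.1 v.2)
  -- no component is a cycle component
  have hnocyc : ∀ c : G.ConnectedComponent, ¬ IsCycleComp n lam mu c := by
    intro c hc
    have h0 := hc ⟨0, hpos⟩ (hcomp _).symm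
    have h2 : (2 : ℕ) ∈ PSums lam ∩ PSums mu :=
      ⟨two_mem_of_covered_zero hl h0.1, two_mem_of_covered_zero hm h0.2⟩
    rw [hind] at h2
    simp at h2
    omega
  constructor
  · rintro ⟨c, hc⟩
    exact hnocyc c hc
  · have hcyc0 : {c : G.ConnectedComponent | IsCycleComp n lam mu c} = ∅ := by
      ext c; simp [hnocyc c]
    have hpath1 : {c : G.ConnectedComponent | ¬ IsCycleComp n lam mu c}
        = {G.connectedComponentMk ⟨0, hpos⟩} := by
      ext c
      simp only [Set.mem_setOf_eq, Set.mem_singleton_iff]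
      exact ⟨fun _ => hcomp c, fun _ => hnocyc c⟩
    unfold meanderIndex numCycles numPaths
    rw [show {c : (MeanderGraph n lam mu).ConnectedComponent | IsCycleComp n lam mu c} = ∅ from hcyc0,
      show {c : (MeanderGraph n lam mu).ConnectedComponent | ¬ IsCycleComp n lam mu c}
        = {G.connectedComponentMk ⟨0, hpos⟩} from hpath1]
    simp
end

section
/- Let A_n = Σ_k (−1)^k a_{n,k}, where a_{n,k} is the number of pairs (λ, μ) of compositions of n with parts in {1,2} whose meander has index k. Then A_n = 0 if n ≡ 2 or 5 (mod 6), A_n = 1 if n ≡ 0 or 4 (mod 6), and A_n = −1 if n ≡ 1 or 3 (mod 6). -/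
/-- starting offsets of the parts equal to 2 -/
def offs : List ℕ → Finset ℕ
  | [] => ∅
  | x :: xs => (if x = 2 then {0} else ∅) ∪ (offs xs).image (· + x)

theorem mem_offs_iff (l : List ℕ) (a : ℕ) :
    a ∈ offs l ↔ ∃ i < l.length, l.getD i 0 = 2 ∧ a = (l.take i).sum := by
  induction l generalizing a with
  | nil => simp [offs]
  | cons x xs ih =>
    simp only [offs, Finset.mem_union, Finset.mem_image, ih]
    constructor
    · rintro (h | ⟨b, ⟨i, hi, h2, rfl⟩, rfl⟩)
      · refine ⟨0, by simp, ?_, ?_⟩ <;> split_ifs at h <;> simp_all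
      · exact ⟨i + 1, by simpa using hi, by simpa using h2, by simp [Nat.add_comm]⟩
    · rintro ⟨i, hi, h2, rfl⟩
      cases i with
      | zero => left; simp_all
      | succ j =>
        right
        exact ⟨(xs.take j).sum, ⟨j, by simpa using hi, by simpa using h2, rfl⟩,
          by simp [Nat.add_comm]⟩

theorem offs_add_two_le (l : List ℕ) (a : ℕ) (ha : a ∈ offs l) : a + 2 ≤ l.sum := by
  induction l generalizing a with
  | nil => simp [offs] at ha
  | cons x xs ih =>
    simp only [offs, Finset.mem_union, Finset.mem_image] at ha
    rcases ha with h | ⟨b, hb, rfl⟩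
    · split_ifs at h with hx
      · simp only [Finset.mem_singleton] at h; subst h; simp [hx, List.sum_cons]
      · simp at h
    · have := ih b hb; simp [List.sum_cons]; omega

theorem offs_matching (l : List ℕ) (hl : ∀ x ∈ l, x = 1 ∨ x = 2) (a : ℕ)
    (ha : a ∈ offs l) : a + 1 ∉ offs l := by
  induction l generalizing a with
  | nil => simp [offs] at ha
  | cons x xs ih =>
    have hx : x = 1 ∨ x = 2 := hl x (by simp)
    have hxs : ∀ y ∈ xs, y = 1 ∨ y = 2 := fun y hy => hl y (by simp [hy])
    simp only [offs, Finset.mem_union, Finset.mem_image] at ha ⊢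
    rcases ha with h | ⟨b, hb, rfl⟩
    · split_ifs at h with hx2
      · simp only [Finset.mem_singleton] at h
        subst h hx2
        push_neg
        constructor
        · intro hc; split_ifs at hc <;> simp at hc
        · rintro b hb
          have := offs_add_two_le xs b hb -- b ≥ 0, b+2 ≤ sum; need b + 2 ≠ 1
          omega
      · simp at h
    · push_neg
      constructor
      · intro hc
        split_ifs at hc <;> simp at hc
      · rintro c hc he
        have : c = b + 1 := by omega
        subst this
        exact (ih hxs b hb) hc

theorem offs_card (l : List ℕ) : (offs l).card = l.count 2 := by
  induction l with
  | nil => simp [offs]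
  | cons x xs ih =>
    have hinj : Function.Injective (· + x) := add_left_injective x
    rw [offs, Finset.card_union_of_disjoint, Finset.card_image_of_injective _ hinj, ih]
    · split_ifs with hx
      · subst hx; simp [List.count_cons]; omega
      · simp [List.count_cons, hx]
    · split_ifs with hx
      · subst hx
        simp only [Finset.disjoint_singleton_left, Finset.mem_image]
        rintro ⟨b, hb, he⟩; omega
      · simp

theorem offs_cons_one (xs : List ℕ) : offs (1 :: xs) = (offs xs).image (· + 1) := by
  simp [offs]

theorem offs_cons_two (xs : List ℕ) : offs (2 :: xs) = insert 0 ((offs xs).image (· + 2)) := by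
  simp [offs, Finset.insert_eq, -Finset.singleton_union]

theorem blockArc_iff (l : List ℕ) (hl : ∀ x ∈ l, x = 1 ∨ x = 2) (u v : ℕ) :
    BlockArc l u v ↔ u ∈ offs l ∧ v = u + 1 := by
  constructor
  · rintro ⟨i, hi, t, ht, hu, hv⟩
    have hp : l.getD i 0 = 1 ∨ l.getD i 0 = 2 := by
      apply hl
      have : l.getD i 0 = l.get ⟨i, hi⟩ := by
        simp [List.getD_eq_getElem?_getD, List.getElem?_eq_getElem hi]
      rw [this]; exact List.get_mem l ⟨i, hi⟩
    have h2 : l.getD i 0 = 2 := by omega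
    have ht0 : t = 0 := by omega
    subst ht0
    rw [h2] at hv
    refine ⟨(mem_offs_iff l u).2 ⟨i, hi, h2, by omega⟩, by omega⟩
  · rintro ⟨hu, rfl⟩
    obtain ⟨i, hi, h2, rfl⟩ := (mem_offs_iff l u).1 hu
    exact ⟨i, hi, 0, by omega, by omega, by rw [h2]⟩

theorem offs_nil : offs [] = ∅ := rfl

theorem offs_one : offs [1] = ∅ := by simp [offs]

section Graph

variable {n : ℕ} {lam mu : List ℕ}

/-- union of upper and lower edge starting positions -/
noncomputable def mS (lam mu : List ℕ) : Finset ℕ := offs lam ∪ offs mu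

theorem mS_lt (hsl : lam.sum = n) (hsm : mu.sum = n) {a : ℕ} (ha : a ∈ mS lam mu) :
    a + 2 ≤ n := by
  rcases Finset.mem_union.1 ha with h | h
  · exact hsl ▸ offs_add_two_le lam a h
  · exact hsm ▸ offs_add_two_le mu a h

theorem meander_adj_iff (hl : ∀ x ∈ lam, x = 1 ∨ x = 2) (hm : ∀ x ∈ mu, x = 1 ∨ x = 2)
    (u v : Fin n) :
    (MeanderGraph n lam mu).Adj u v ↔
      ((u : ℕ) ∈ mS lam mu ∧ (v : ℕ) = u + 1) ∨ ((v : ℕ) ∈ mS lam mu ∧ (u : ℕ) = v + 1) := by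
  have hne : ∀ a b : Fin n, (b : ℕ) = (a : ℕ) + 1 → a ≠ b := by
    intro a b h hab; subst hab; omega
  simp only [MeanderGraph, SimpleGraph.fromRel_adj, blockArc_iff lam hl, blockArc_iff mu hm,
    mS, Finset.mem_union]
  constructor
  · rintro ⟨hne', h⟩; tauto
  · rintro (⟨h1, h2⟩ | ⟨h1, h2⟩)
    · exact ⟨hne u v h2, by tauto⟩
    · exact ⟨(hne v u h2).symm, by tauto⟩

/-- interval relation: all positions between u and v carry an edge -/
def Rrel (lam mu : List ℕ) (u v : ℕ) : Prop :=
  ∀ i : ℕ, min u v ≤ i → i < max u v → i ∈ mS lam mu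

theorem Rrel_refl (u : ℕ) : Rrel lam mu u u := by intro i h1 h2; omega

theorem Rrel_symm {u v : ℕ} (h : Rrel lam mu u v) : Rrel lam mu v u := by
  intro i h1 h2; exact h i (by omega) (by omega)

theorem Rrel_trans {u v w : ℕ} (h1 : Rrel lam mu u v) (h2 : Rrel lam mu v w) :
    Rrel lam mu u w := by
  intro i ha hb
  by_cases hc : min u v ≤ i ∧ i < max u v
  · exact h1 i hc.1 hc.2
  · exact h2 i (by omega) (by omega)

theorem Rrel_of_adj (hl : ∀ x ∈ lam, x = 1 ∨ x = 2) (hm : ∀ x ∈ mu, x = 1 ∨ x = 2)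
    {u v : Fin n} (h : (MeanderGraph n lam mu).Adj u v) : Rrel lam mu (u : ℕ) (v : ℕ) := by
  rcases (meander_adj_iff hl hm u v).1 h with ⟨h1, h2⟩ | ⟨h1, h2⟩ <;>
    · intro i ha hb
      have hi : i = min (u : ℕ) (v : ℕ) := by omega
      subst hi
      first
        | (have : min (u : ℕ) (v : ℕ) = (u : ℕ) := by omega); rwa [this]
        | (have : min (u : ℕ) (v : ℕ) = (v : ℕ) := by omega); rwa [this]

theorem Rrel_of_reachable (hl : ∀ x ∈ lam, x = 1 ∨ x = 2) (hm : ∀ x ∈ mu, x = 1 ∨ x = 2)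
    {u v : Fin n} (h : (MeanderGraph n lam mu).Reachable u v) : Rrel lam mu (u : ℕ) (v : ℕ) := by
  obtain ⟨w⟩ := h
  induction w with
  | nil => exact Rrel_refl _
  | cons hadj p ih => exact Rrel_trans (Rrel_of_adj hl hm hadj) ih

theorem reachable_of_chain (hl : ∀ x ∈ lam, x = 1 ∨ x = 2) (hm : ∀ x ∈ mu, x = 1 ∨ x = 2)
    (k : ℕ) (u : Fin n) (h : (u : ℕ) + k < n)
    (hc : ∀ i : ℕ, (u : ℕ) ≤ i → i < (u : ℕ) + k → i ∈ mS lam mu) :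
    (MeanderGraph n lam mu).Reachable u ⟨(u : ℕ) + k, h⟩ := by
  induction k with
  | zero =>
    have : (⟨(u : ℕ) + 0, h⟩ : Fin n) = u := by apply Fin.ext; simp
    rw [this]
  | succ k ih =>
    have h' : (u : ℕ) + k < n := by omega
    have r1 := ih h' (fun i hi1 hi2 => hc i hi1 (by omega))
    have hadj : (MeanderGraph n lam mu).Adj ⟨(u : ℕ) + k, h'⟩ ⟨(u : ℕ) + k + 1, h⟩ := by
      rw [meander_adj_iff hl hm]
      left
      refine ⟨?_, by simp⟩
      simpa using hc _ (by omega) (by omega)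
    exact r1.trans hadj.reachable

theorem reachable_of_Rrel (hl : ∀ x ∈ lam, x = 1 ∨ x = 2) (hm : ∀ x ∈ mu, x = 1 ∨ x = 2)
    {u v : Fin n} (h : Rrel lam mu (u : ℕ) (v : ℕ)) :
    (MeanderGraph n lam mu).Reachable u v := by
  rcases le_total (u : ℕ) (v : ℕ) with hle | hle
  · have hv : v = ⟨(u : ℕ) + ((v : ℕ) - (u : ℕ)), by omega⟩ := by
      apply Fin.ext; simp; omega
    rw [hv]
    exact reachable_of_chain hl hm _ u _ (fun i h1 h2 => h i (by omega) (by omega))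
  · refine (?_ : (MeanderGraph n lam mu).Reachable v u).symm
    have hv : u = ⟨(v : ℕ) + ((u : ℕ) - (v : ℕ)), by omega⟩ := by
      apply Fin.ext; simp; omega
    rw [hv]
    exact reachable_of_chain hl hm _ v _
      (fun i h1 h2 => Rrel_symm h i (by omega) (by omega))

/-- the predicate picking out the leftmost vertex of each component -/
def startP (lam mu : List ℕ) (a : ℕ) : Prop := a = 0 ∨ a - 1 ∉ mS lam mu

noncomputable instance : DecidablePred (startP lam mu) := fun _ => Classical.dec _

/-- leftmost vertex of the component of `v` -/
noncomputable def fstart (lam mu : List ℕ) (v : ℕ) : ℕ := Nat.findGreatest (startP lam mu) v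

theorem fstart_le (v : ℕ) : fstart lam mu v ≤ v := Nat.findGreatest_le v

theorem fstart_P (v : ℕ) : startP lam mu (fstart lam mu v) :=
  Nat.findGreatest_spec (Nat.zero_le v) (Or.inl rfl)

theorem fstart_chain (v : ℕ) : ∀ i, fstart lam mu v ≤ i → i < v → i ∈ mS lam mu := by
  intro i h1 h2
  by_contra hi
  have hP : startP lam mu (i + 1) := Or.inr (by simpa using hi)
  have := Nat.le_findGreatest (by omega : i + 1 ≤ v) hP
  unfold fstart at h1
  omega

theorem fstart_eq_of_P {v : ℕ} (h : startP lam mu v) : fstart lam mu v = v :=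
  le_antisymm (Nat.findGreatest_le v) (Nat.le_findGreatest le_rfl h)

theorem fstart_add (u k : ℕ) (hc : ∀ i : ℕ, u ≤ i → i < u + k → i ∈ mS lam mu) :
    fstart lam mu (u + k) = fstart lam mu u := by
  induction k with
  | zero => rfl
  | succ k ih =>
    have h1 : ¬ startP lam mu (u + k + 1) := by
      unfold startP
      push_neg
      exact ⟨by omega, by simpa using hc (u + k) (by omega) (by omega)⟩
    have : fstart lam mu (u + (k + 1)) = fstart lam mu (u + k) := by
      unfold fstart
      rw [show u + (k + 1) = (u + k) + 1 by omega, Nat.findGreatest_succ, if_neg h1]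
    rw [this, ih (fun i hi1 hi2 => hc i hi1 (by omega))]

theorem fstart_eq_of_Rrel {u v : ℕ} (h : Rrel lam mu u v) :
    fstart lam mu u = fstart lam mu v := by
  rcases le_total u v with hle | hle
  · rw [show v = u + (v - u) by omega, fstart_add u (v - u)
      (fun i h1 h2 => h i (by omega) (by omega))]
  · rw [show u = v + (u - v) by omega, fstart_add v (u - v)
      (fun i h1 h2 => h i (by omega) (by omega))]

theorem mk_eq_mk_iff (hl : ∀ x ∈ lam, x = 1 ∨ x = 2) (hm : ∀ x ∈ mu, x = 1 ∨ x = 2)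
    (hsl : lam.sum = n) (hsm : mu.sum = n) (u v : Fin n) :
    (MeanderGraph n lam mu).connectedComponentMk u = (MeanderGraph n lam mu).connectedComponentMk v
      ↔ Rrel lam mu (u : ℕ) (v : ℕ) := by
  rw [SimpleGraph.ConnectedComponent.eq]
  exact ⟨Rrel_of_reachable hl hm, reachable_of_Rrel hl hm⟩

end Graph

section Count

variable {n : ℕ} {lam mu : List ℕ}

/-- map a position to the connected component of the corresponding vertex -/
noncomputable def cmk (n : ℕ) (lam mu : List ℕ) (hn : 0 < n) (a : ℕ) :
    (MeanderGraph n lam mu).ConnectedComponent :=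
  (MeanderGraph n lam mu).connectedComponentMk ⟨a % n, Nat.mod_lt _ hn⟩

/-- leftmost vertices of components -/
noncomputable def Tset (n : ℕ) (lam mu : List ℕ) : Finset ℕ :=
  (Finset.range n).filter (startP lam mu)

/-- positions of doubled edges -/
noncomputable def Iset (lam mu : List ℕ) : Finset ℕ := offs lam ∩ offs mu

theorem Iset_lt (hsl : lam.sum = n) (ha : a ∈ Iset lam mu) : a + 2 ≤ n := by
  rw [← hsl]
  exact offs_add_two_le lam a (Finset.mem_inter.1 ha).1

theorem Iset_startP (hl : ∀ x ∈ lam, x = 1 ∨ x = 2) (hm : ∀ x ∈ mu, x = 1 ∨ x = 2) (ha : a ∈ Iset lam mu) : startP lam mu a := by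
  rcases Finset.mem_inter.1 ha with ⟨h1, h2⟩
  rcases Nat.eq_zero_or_pos a with h0 | h0
  · exact Or.inl h0
  · right
    intro hc
    rcases Finset.mem_union.1 hc with hc | hc
    · exact offs_matching lam hl (a - 1) hc (by rw [show a - 1 + 1 = a by omega]; exact h1)
    · exact offs_matching mu hm (a - 1) hc (by rw [show a - 1 + 1 = a by omega]; exact h2)

theorem Iset_succ_not (hl : ∀ x ∈ lam, x = 1 ∨ x = 2) (hm : ∀ x ∈ mu, x = 1 ∨ x = 2) (ha : a ∈ Iset lam mu) : a + 1 ∉ mS lam mu := by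
  rcases Finset.mem_inter.1 ha with ⟨h1, h2⟩
  intro hc
  rcases Finset.mem_union.1 hc with hc | hc
  · exact offs_matching lam hl a h1 hc
  · exact offs_matching mu hm a h2 hc

theorem Iset_subset_Tset (hl : ∀ x ∈ lam, x = 1 ∨ x = 2) (hm : ∀ x ∈ mu, x = 1 ∨ x = 2) (hsl : lam.sum = n) (ha : a ∈ Iset lam mu) : a ∈ Tset n lam mu := by
  refine Finset.mem_filter.2 ⟨Finset.mem_range.2 ?_, Iset_startP hl hm ha⟩
  have := Iset_lt hsl ha
  omega

theorem cmk_fstart (hl : ∀ x ∈ lam, x = 1 ∨ x = 2) (hm : ∀ x ∈ mu, x = 1 ∨ x = 2) (hsl : lam.sum = n) (hsm : mu.sum = n) (hn : 0 < n) (v : Fin n) :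
    cmk n lam mu hn (fstart lam mu (v : ℕ)) = (MeanderGraph n lam mu).connectedComponentMk v := by
  have hlt : fstart lam mu (v : ℕ) < n := lt_of_le_of_lt (fstart_le _) v.isLt
  rw [cmk, mk_eq_mk_iff hl hm hsl hsm]
  intro i h1 h2
  have hle : fstart lam mu (v : ℕ) ≤ (v : ℕ) := fstart_le _
  simp only [Nat.mod_eq_of_lt hlt, min_eq_left hle, max_eq_right hle] at h1 h2
  exact fstart_chain (v : ℕ) i h1 h2

theorem fstart_mem_Tset (v : Fin n) : fstart lam mu (v : ℕ) ∈ Tset n lam mu :=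
  Finset.mem_filter.2 ⟨Finset.mem_range.2 (lt_of_le_of_lt (fstart_le _) v.isLt), fstart_P _⟩

theorem univ_eq_image (hl : ∀ x ∈ lam, x = 1 ∨ x = 2) (hm : ∀ x ∈ mu, x = 1 ∨ x = 2) (hsl : lam.sum = n) (hsm : mu.sum = n) (hn : 0 < n) :
    (Set.univ : Set (MeanderGraph n lam mu).ConnectedComponent)
      = cmk n lam mu hn '' ↑(Tset n lam mu) := by
  apply Set.eq_of_subset_of_subset
  · rintro c -
    obtain ⟨v, rfl⟩ := c.exists_rep
    exact ⟨fstart lam mu (v : ℕ), fstart_mem_Tset v, cmk_fstart hl hm hsl hsm hn v⟩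
  · exact fun _ _ => trivial

theorem cmk_injOn (hl : ∀ x ∈ lam, x = 1 ∨ x = 2) (hm : ∀ x ∈ mu, x = 1 ∨ x = 2) (hsl : lam.sum = n) (hsm : mu.sum = n) (hn : 0 < n) : Set.InjOn (cmk n lam mu hn) ↑(Tset n lam mu) := by
  intro a ha b hb he
  simp only [Finset.coe_filter, Set.mem_setOf_eq, Tset, Finset.mem_coe, Finset.mem_filter,
    Finset.mem_range] at ha hb
  rw [cmk, cmk, mk_eq_mk_iff hl hm hsl hsm] at he
  simp only [Nat.mod_eq_of_lt ha.1, Nat.mod_eq_of_lt hb.1] at he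
  by_contra hne
  rcases Nat.lt_or_ge a b with hab | hab
  · have := he (b - 1) (by omega) (by omega)
    rcases hb.2 with h0 | h0
    · omega
    · exact h0 this
  · have hab' : b < a := by omega
    have := he (a - 1) (by omega) (by omega)
    rcases ha.2 with h0 | h0
    · omega
    · exact h0 this

theorem cycle_eq_image (hl : ∀ x ∈ lam, x = 1 ∨ x = 2) (hm : ∀ x ∈ mu, x = 1 ∨ x = 2) (hsl : lam.sum = n) (hsm : mu.sum = n) (hn : 0 < n) :
    {c : (MeanderGraph n lam mu).ConnectedComponent | IsCycleComp n lam mu c}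
      = cmk n lam mu hn '' ↑(Iset lam mu) := by
  apply Set.eq_of_subset_of_subset
  · rintro c hc
    obtain ⟨v, rfl⟩ := c.exists_rep
    set a := fstart lam mu (v : ℕ) with hadef
    have hmk := cmk_fstart hl hm hsl hsm hn v
    have hlt : a < n := lt_of_le_of_lt (fstart_le _) v.isLt
    have hP : startP lam mu a := fstart_P _
    have hle : a ≤ (v : ℕ) := fstart_le _
    have heq : (MeanderGraph n lam mu).connectedComponentMk ⟨a, hlt⟩
        = (MeanderGraph n lam mu).connectedComponentMk v := by
      rw [mk_eq_mk_iff hl hm hsl hsm]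
      intro i h1 h2
      simp only [Fin.val_mk, min_eq_left hle, max_eq_right hle] at h1 h2
      exact fstart_chain (v : ℕ) i h1 h2
    have hcov := hc ⟨a, hlt⟩ heq
    simp only [Fin.val_mk] at hcov
    refine ⟨a, ?_, hmk⟩
    simp only [Iset, Finset.mem_coe, Finset.mem_inter]
    constructor
    · rcases hcov.1 with ⟨u, hu | hu⟩
      · rw [blockArc_iff lam hl] at hu
        exfalso
        rcases hP with h0 | h0
        · omega
        · exact h0 (Finset.mem_union.2 (Or.inl (by rw [show a - 1 = u by omega]; exact hu.1)))
      · rw [blockArc_iff lam hl] at hu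
        exact hu.1
    · rcases hcov.2 with ⟨u, hu | hu⟩
      · rw [blockArc_iff mu hm] at hu
        exfalso
        rcases hP with h0 | h0
        · omega
        · exact h0 (Finset.mem_union.2 (Or.inr (by rw [show a - 1 = u by omega]; exact hu.1)))
      · rw [blockArc_iff mu hm] at hu
        exact hu.1
  · rintro c ⟨a, ha, rfl⟩
    rw [Finset.mem_coe] at ha
    have h2n := Iset_lt hsl ha
    have hP := Iset_startP hl hm ha
    have hsucc := Iset_succ_not hl hm ha
    rcases Finset.mem_inter.1 ha with ⟨ha1, ha2⟩
    intro v hv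
    rw [cmk, mk_eq_mk_iff hl hm hsl hsm] at hv
    simp only [Fin.val_mk, Nat.mod_eq_of_lt (show a < n by omega)] at hv
    have hva : (v : ℕ) = a ∨ (v : ℕ) = a + 1 := by
      by_contra hc
      push_neg at hc
      rcases Nat.lt_or_ge (v : ℕ) a with h | h
      · have := hv (a - 1) (by omega) (by omega)
        rcases hP with h0 | h0
        · omega
        · exact h0 this
      · exact hsucc (hv (a + 1) (by omega) (by omega))
    constructor
    · rcases hva with h | h
      · exact ⟨a + 1, Or.inr ((blockArc_iff lam hl _ _).2 ⟨h ▸ ha1, by omega⟩)⟩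
      · exact ⟨a, Or.inl ((blockArc_iff lam hl _ _).2 ⟨ha1, by omega⟩)⟩
    · rcases hva with h | h
      · exact ⟨a + 1, Or.inr ((blockArc_iff mu hm _ _).2 ⟨h ▸ ha2, by omega⟩)⟩
      · exact ⟨a, Or.inl ((blockArc_iff mu hm _ _).2 ⟨ha2, by omega⟩)⟩

theorem Tset_card (hsl : lam.sum = n) (hsm : mu.sum = n) : (Tset n lam mu).card = n - (mS lam mu).card := by
  have hsplit := Finset.card_filter_add_card_filter_not
    (s := Finset.range n) (p := startP lam mu)
  have himg : (Finset.range n).filter (fun a => ¬ startP lam mu a)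
      = (mS lam mu).image (· + 1) := by
    ext b
    rw [Finset.mem_filter, Finset.mem_range, Finset.mem_image]
    simp only [startP, not_or, not_not]
    constructor
    · rintro ⟨hb, hb0, hb1⟩
      exact ⟨b - 1, hb1, by omega⟩
    · rintro ⟨a, haS, rfl⟩
      have := mS_lt hsl hsm haS
      refine ⟨by omega, by omega, by simpa using haS⟩
  have hinj : ((mS lam mu).image (· + 1)).card = (mS lam mu).card :=
    Finset.card_image_of_injective _ (add_left_injective 1)
  have hcard : (mS lam mu).card ≤ n := by
    rw [← hinj, ← himg]
    exact le_trans (Finset.card_filter_le _ _) (by simp)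
  rw [Tset]
  simp only [Finset.card_range] at hsplit
  rw [himg, hinj] at hsplit
  omega

theorem meanderIndex_eq (hl : ∀ x ∈ lam, x = 1 ∨ x = 2) (hm : ∀ x ∈ mu, x = 1 ∨ x = 2) (hsl : lam.sum = n) (hsm : mu.sum = n) (hn : 0 < n) :
    meanderIndex n lam mu = (Tset n lam mu).card + (Iset lam mu).card := by
  haveI : Finite ((MeanderGraph n lam mu).ConnectedComponent) := Quot.finite _
  have hcyc : numCycles n lam mu = (Iset lam mu).card := by
    rw [numCycles, cycle_eq_image hl hm hsl hsm hn,
      Set.ncard_image_of_injOn ((cmk_injOn hl hm hsl hsm hn).mono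
        (fun a ha => (Iset_subset_Tset hl hm hsl (Finset.mem_coe.1 ha) : a ∈ Tset n lam mu))),
      Set.ncard_coe_finset]
  have htot : (Set.univ : Set (MeanderGraph n lam mu).ConnectedComponent).ncard
      = (Tset n lam mu).card := by
    rw [univ_eq_image hl hm hsl hsm hn,
      Set.ncard_image_of_injOn (cmk_injOn hl hm hsl hsm hn), Set.ncard_coe_finset]
  have hpath : numPaths n lam mu
      = (Tset n lam mu).card - (Iset lam mu).card := by
    rw [numPaths]
    have hdiff : {c : (MeanderGraph n lam mu).ConnectedComponent | ¬ IsCycleComp n lam mu c}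
        = Set.univ \ {c | IsCycleComp n lam mu c} := by
      ext c; simp
    have hset : {c : (MeanderGraph n lam mu).ConnectedComponent
        | IsCycleComp n lam mu c}.ncard = (Iset lam mu).card := hcyc
    rw [hdiff, Set.ncard_diff (Set.subset_univ _) (Set.toFinite _), htot, hset]
  have hle : (Iset lam mu).card ≤ (Tset n lam mu).card :=
    Finset.card_le_card (fun a ha => Iset_subset_Tset hl hm hsl ha)
  rw [meanderIndex, hcyc, hpath]
  omega

end Count

section Sum

variable {n : ℕ} {lam mu : List ℕ}

theorem mS_def : mS lam mu = offs lam ∪ offs mu := rfl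
theorem Iset_def : Iset lam mu = offs lam ∩ offs mu := rfl

theorem mS_card_le (hsl : lam.sum = n) (hsm : mu.sum = n) (hn : 0 < n) :
    (mS lam mu).card ≤ n - 1 := by
  have : mS lam mu ⊆ Finset.range (n - 1) := by
    intro a ha
    have := mS_lt hsl hsm ha
    exact Finset.mem_range.2 (by omega)
  simpa using Finset.card_le_card this

theorem Iset_card_le : (Iset lam mu).card ≤ (mS lam mu).card :=
  Finset.card_le_card (fun a ha => Finset.mem_union.2 (Or.inl (Finset.mem_inter.1 ha).1))

theorem meanderIndex_bounds (hl : ∀ x ∈ lam, x = 1 ∨ x = 2) (hm : ∀ x ∈ mu, x = 1 ∨ x = 2)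
    (hsl : lam.sum = n) (hsm : mu.sum = n) (hn : 0 < n) :
    1 ≤ meanderIndex n lam mu ∧ meanderIndex n lam mu ≤ n := by
  rw [meanderIndex_eq hl hm hsl hsm hn, Tset_card hsl hsm]
  have h1 := mS_card_le hsl hsm hn
  have h2 := Iset_card_le (lam := lam) (mu := mu)
  omega

theorem meanderIndex_key (hl : ∀ x ∈ lam, x = 1 ∨ x = 2) (hm : ∀ x ∈ mu, x = 1 ∨ x = 2)
    (hsl : lam.sum = n) (hsm : mu.sum = n) (hn : 0 < n) :
    meanderIndex n lam mu + (offs lam).card + (offs mu).card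
      = n + 2 * (Iset lam mu).card := by
  rw [meanderIndex_eq hl hm hsl hsm hn, Tset_card hsl hsm]
  have hu := Finset.card_union_add_card_inter (offs lam) (offs mu)
  rw [← mS_def, ← Iset_def] at hu
  have h1 := mS_card_le hsl hsm hn
  have h2 := Iset_card_le (lam := lam) (mu := mu)
  omega

theorem sign_eq (hl : ∀ x ∈ lam, x = 1 ∨ x = 2) (hm : ∀ x ∈ mu, x = 1 ∨ x = 2)
    (hsl : lam.sum = n) (hsm : mu.sum = n) (hn : 0 < n) :
    (-1 : ℤ) ^ meanderIndex n lam mu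
      = (-1) ^ n * (-1) ^ (offs lam).card * (-1) ^ (offs mu).card := by
  have hA := meanderIndex_key hl hm hsl hsm hn
  have hpow := congrArg (fun k => (-1 : ℤ) ^ k) hA
  simp only [pow_add] at hpow
  have h2 : (-1 : ℤ) ^ (2 * (Iset lam mu).card) = 1 := by
    rw [pow_mul]; norm_num
  rw [h2, mul_one] at hpow
  have hcl : (-1 : ℤ) ^ (offs lam).card * (-1) ^ (offs lam).card = 1 := by
    rw [← pow_add]; exact Even.neg_one_pow ⟨_, rfl⟩
  have hcm : (-1 : ℤ) ^ (offs mu).card * (-1) ^ (offs mu).card = 1 := by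
    rw [← pow_add]; exact Even.neg_one_pow ⟨_, rfl⟩
  calc (-1 : ℤ) ^ meanderIndex n lam mu
      = (-1) ^ meanderIndex n lam mu * ((-1) ^ (offs lam).card * (-1) ^ (offs lam).card)
        * ((-1) ^ (offs mu).card * (-1) ^ (offs mu).card) := by rw [hcl, hcm]; ring
    _ = ((-1) ^ meanderIndex n lam mu * (-1) ^ (offs lam).card * (-1) ^ (offs mu).card)
        * ((-1) ^ (offs lam).card * (-1) ^ (offs mu).card) := by ring
    _ = (-1) ^ n * ((-1) ^ (offs lam).card * (-1) ^ (offs mu).card) := by rw [hpow]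
    _ = _ := by ring

/-- compositions of `n` with all parts in `{1, 2}` -/
def Comps : ℕ → Finset (List ℕ)
  | 0 => {[]}
  | 1 => {[1]}
  | (n + 2) => ((Comps (n + 1)).image (List.cons 1)) ∪ ((Comps n).image (List.cons 2))

theorem eq_nil_of_sum_zero {l : List ℕ} (hl : ∀ x ∈ l, x = 1 ∨ x = 2) (h : l.sum = 0) :
    l = [] := by
  cases l with
  | nil => rfl
  | cons x xs =>
    have := hl x (by simp)
    simp [List.sum_cons] at h
    omega

theorem mem_Comps : ∀ n : ℕ, ∀ l : List ℕ,
    l ∈ Comps n ↔ (∀ x ∈ l, x = 1 ∨ x = 2) ∧ l.sum = n := by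
  intro n
  induction n using Nat.strong_induction_on with
  | _ n ih =>
    match n with
    | 0 =>
      intro l
      simp only [Comps, Finset.mem_singleton]
      constructor
      · rintro rfl; simp
      · rintro ⟨h1, h2⟩; exact eq_nil_of_sum_zero h1 h2
    | 1 =>
      intro l
      simp only [Comps, Finset.mem_singleton]
      constructor
      · rintro rfl; simp
      · rintro ⟨h1, h2⟩
        cases l with
        | nil => simp at h2
        | cons x xs =>
          have hx := h1 x (by simp)
          simp only [List.sum_cons] at h2
          have hx1 : x = 1 := by
            rcases hx with h | h
            · exact h
            · exfalso; omega
          subst hx1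
          have : xs = [] := eq_nil_of_sum_zero (fun y hy => h1 y (by simp [hy])) (by omega)
          rw [this]
    | (m + 2) =>
      intro l
      simp only [Comps, Finset.mem_union, Finset.mem_image]
      constructor
      · rintro (⟨a, ha, rfl⟩ | ⟨a, ha, rfl⟩)
        · obtain ⟨h1, h2⟩ := (ih (m + 1) (by omega) a).1 ha
          refine ⟨fun x hx => ?_, by simp [h2]; omega⟩
          rcases List.mem_cons.1 hx with rfl | hx
          · exact Or.inl rfl
          · exact h1 x hx
        · obtain ⟨h1, h2⟩ := (ih m (by omega) a).1 ha
          refine ⟨fun x hx => ?_, by simp [h2]; omega⟩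
          rcases List.mem_cons.1 hx with rfl | hx
          · exact Or.inr rfl
          · exact h1 x hx
      · rintro ⟨h1, h2⟩
        cases l with
        | nil => simp at h2
        | cons x xs =>
          have hx := h1 x (by simp)
          have hxs : ∀ y ∈ xs, y = 1 ∨ y = 2 := fun y hy => h1 y (by simp [hy])
          simp only [List.sum_cons] at h2
          rcases hx with rfl | rfl
          · exact Or.inl ⟨xs, (ih (m + 1) (by omega) xs).2 ⟨hxs, by omega⟩, rfl⟩
          · exact Or.inr ⟨xs, (ih m (by omega) xs).2 ⟨hxs, by omega⟩, rfl⟩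

theorem offs_card_cons_one (xs : List ℕ) : (offs (1 :: xs)).card = (offs xs).card := by
  rw [offs_cons_one, Finset.card_image_of_injective _ (add_left_injective 1)]

theorem offs_card_cons_two (xs : List ℕ) : (offs (2 :: xs)).card = (offs xs).card + 1 := by
  rw [offs_cons_two, Finset.card_insert_of_notMem, Finset.card_image_of_injective _
    (add_left_injective 2)]
  simp only [Finset.mem_image]
  rintro ⟨b, hb, he⟩
  omega

/-- the signed count of compositions -/
noncomputable def Fsum (n : ℕ) : ℤ := ∑ l ∈ Comps n, (-1 : ℤ) ^ (offs l).card

theorem Fsum_zero : Fsum 0 = 1 := by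
  rw [Fsum]
  show ∑ l ∈ ({[]} : Finset (List ℕ)), (-1 : ℤ) ^ (offs l).card = 1
  rw [Finset.sum_singleton]
  norm_num [offs_nil]

theorem Fsum_one : Fsum 1 = 1 := by
  rw [Fsum]
  show ∑ l ∈ ({[1]} : Finset (List ℕ)), (-1 : ℤ) ^ (offs l).card = 1
  rw [Finset.sum_singleton]
  norm_num [offs_one]

theorem Fsum_rec (n : ℕ) : Fsum (n + 2) = Fsum (n + 1) - Fsum n := by
  have hdisj : Disjoint ((Comps (n + 1)).image (List.cons 1)) ((Comps n).image (List.cons 2)) := by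
    rw [Finset.disjoint_left]
    intro l hl1 hl2
    obtain ⟨a, _, rfl⟩ := Finset.mem_image.1 hl1
    obtain ⟨b, _, he⟩ := Finset.mem_image.1 hl2
    simp at he
  have hinj1 : ∀ x ∈ Comps (n + 1), ∀ y ∈ Comps (n + 1),
      List.cons 1 x = List.cons 1 y → x = y := by intro x _ y _ h; simpa using h
  have hinj2 : ∀ x ∈ Comps n, ∀ y ∈ Comps n,
      List.cons 2 x = List.cons 2 y → x = y := by intro x _ y _ h; simpa using h
  rw [Fsum, show Comps (n + 2) = ((Comps (n + 1)).image (List.cons 1))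
      ∪ ((Comps n).image (List.cons 2)) from rfl,
    Finset.sum_union hdisj, Finset.sum_image hinj1, Finset.sum_image hinj2]
  have e1 : ∀ x ∈ Comps (n + 1), (-1 : ℤ) ^ (offs (1 :: x)).card = (-1) ^ (offs x).card := by
    intro x _; rw [offs_card_cons_one]
  have e2 : ∀ x ∈ Comps n, (-1 : ℤ) ^ (offs (2 :: x)).card = -(-1) ^ (offs x).card := by
    intro x _; rw [offs_card_cons_two, pow_succ]; ring
  rw [Finset.sum_congr rfl e1, Finset.sum_congr rfl e2, Fsum, Fsum]
  rw [Finset.sum_neg_distrib]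
  ring

/-- the value of `Fsum` as a function of `n % 6` -/
def gval : ℕ → ℤ
  | 0 => 1
  | 1 => 1
  | 2 => 0
  | 3 => -1
  | 4 => -1
  | _ => 0

theorem Fsum_mod : ∀ n : ℕ, Fsum n = gval (n % 6) := by
  intro n
  induction n using Nat.strong_induction_on with
  | _ n ih =>
    match n with
    | 0 => simpa [gval] using Fsum_zero
    | 1 => simpa [gval] using Fsum_one
    | (m + 2) =>
      rw [Fsum_rec, ih (m + 1) (by omega), ih m (by omega)]
      have h6 : m % 6 = 0 ∨ m % 6 = 1 ∨ m % 6 = 2 ∨ m % 6 = 3 ∨ m % 6 = 4 ∨ m % 6 = 5 := by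
        omega
      rcases h6 with h | h | h | h | h | h <;>
        rw [show (m + 2) % 6 = (m % 6 + 2) % 6 by omega, show (m + 1) % 6 = (m % 6 + 1) % 6
          by omega, h] <;> rfl

end Sum

/-- `a_{n,k}`: the number of pairs `(λ, μ)` of compositions of `n` with parts in
`{1,2}` whose meander has index `k`. -/
noncomputable def aIdx (n k : ℕ) : ℕ :=
  {p : List ℕ × List ℕ | (∀ x ∈ p.1, x = 1 ∨ x = 2) ∧ (∀ x ∈ p.2, x = 1 ∨ x = 2) ∧
    p.1.sum = n ∧ p.2.sum = n ∧ meanderIndex n p.1 p.2 = k}.ncard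

theorem aIdx_eq (n k : ℕ) :
    aIdx n k = (((Comps n) ×ˢ (Comps n)).filter (fun p => meanderIndex n p.1 p.2 = k)).card := by
  rw [aIdx, ← Set.ncard_coe_finset]
  congr 1
  ext p
  simp only [Set.mem_setOf_eq, Finset.coe_filter, Finset.mem_product, mem_Comps]
  tauto

theorem alt_sum (n : ℕ) (hn : 0 < n) :
    ∑ k ∈ Finset.Icc 1 n, (-1 : ℤ) ^ k * (aIdx n k : ℤ)
      = (-1) ^ n * Fsum n * Fsum n := by
  have hmaps : ∀ p ∈ (Comps n) ×ˢ (Comps n), meanderIndex n p.1 p.2 ∈ Finset.Icc 1 n := by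
    intro p hp
    rw [Finset.mem_product] at hp
    obtain ⟨h1, hs1⟩ := (mem_Comps n p.1).1 hp.1
    obtain ⟨h2, hs2⟩ := (mem_Comps n p.2).1 hp.2
    have := meanderIndex_bounds h1 h2 hs1 hs2 hn
    exact Finset.mem_Icc.2 this
  have hfib := Finset.sum_fiberwise_of_maps_to hmaps
    (fun p => (-1 : ℤ) ^ meanderIndex n p.1 p.2)
  have hstep : ∀ k ∈ Finset.Icc 1 n,
      ∑ p ∈ ((Comps n) ×ˢ (Comps n)).filter (fun p => meanderIndex n p.1 p.2 = k),
        (-1 : ℤ) ^ meanderIndex n p.1 p.2 = (-1 : ℤ) ^ k * (aIdx n k : ℤ) := by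
    intro k _
    rw [aIdx_eq, Finset.sum_congr rfl
      (fun p hp => by rw [(Finset.mem_filter.1 hp).2]), Finset.sum_const, nsmul_eq_mul]
    ring
  rw [Finset.sum_congr rfl hstep] at hfib
  rw [hfib, Finset.sum_product]
  have hsgn : ∑ x ∈ Comps n, ∑ y ∈ Comps n, (-1 : ℤ) ^ meanderIndex n x y
      = ∑ x ∈ Comps n, ∑ y ∈ Comps n,
        ((-1 : ℤ) ^ n * (-1) ^ (offs x).card) * (-1) ^ (offs y).card := by
    refine Finset.sum_congr rfl fun x hx => Finset.sum_congr rfl fun y hy => ?_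
    obtain ⟨h1, hs1⟩ := (mem_Comps n x).1 hx
    obtain ⟨h2, hs2⟩ := (mem_Comps n y).1 hy
    rw [sign_eq h1 h2 hs1 hs2 hn]
  rw [hsgn]
  calc ∑ x ∈ Comps n, ∑ y ∈ Comps n,
        ((-1 : ℤ) ^ n * (-1) ^ (offs x).card) * (-1) ^ (offs y).card
      = ∑ x ∈ Comps n, ((-1 : ℤ) ^ n * (-1) ^ (offs x).card)
          * ∑ y ∈ Comps n, (-1 : ℤ) ^ (offs y).card := by
        refine Finset.sum_congr rfl fun x _ => ?_
        rw [Finset.mul_sum]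
    _ = (-1) ^ n * Fsum n * Fsum n := by
        rw [← Finset.sum_mul, ← Finset.mul_sum]
        simp only [Fsum]
        try ring

/-- The alternating sum `Σ_{k=1}^n (−1)^k a_{n,k}` equals `0, 1, −1` according to
`n mod 6` being in `{2,5}`, `{0,4}`, `{1,3}` respectively. -/
theorem stmt16 (n : ℕ) (hn : 1 ≤ n) :
    (n % 6 = 2 ∨ n % 6 = 5 →
      ∑ k ∈ Finset.Icc 1 n, (-1 : ℤ) ^ k * (aIdx n k : ℤ) = 0) ∧
    (n % 6 = 0 ∨ n % 6 = 4 →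
      ∑ k ∈ Finset.Icc 1 n, (-1 : ℤ) ^ k * (aIdx n k : ℤ) = 1) ∧
    (n % 6 = 1 ∨ n % 6 = 3 →
      ∑ k ∈ Finset.Icc 1 n, (-1 : ℤ) ^ k * (aIdx n k : ℤ) = -1) := by
  have h := alt_sum n hn
  rw [Fsum_mod] at h
  have heven : n % 2 = 0 → (-1 : ℤ) ^ n = 1 := fun h2 =>
    Even.neg_one_pow (Nat.even_iff.2 h2)
  have hodd : n % 2 = 1 → (-1 : ℤ) ^ n = -1 := fun h2 =>
    Odd.neg_one_pow (Nat.odd_iff.2 h2)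
  refine ⟨?_, ?_, ?_⟩ <;> rintro (hc | hc) <;> rw [h, hc]
  · simp [gval]
  · simp [gval]
  · rw [heven (by omega)]; rfl
  · rw [heven (by omega)]; rfl
  · rw [hodd (by omega)]; rfl
  · rw [hodd (by omega)]; rfl
end

section
/- Let (λ, μ) be a pair of compositions of n with parts in {1, j}, j ∈ {2,3,4,5,7}, λ_1 = j, μ_1 = 1, and PS(λ) ∩ PS(μ) = {n} (an indecomposable meander), and let N_o be the total number of odd parts among λ and μ combined. Then the index of the meander (λ, μ) equals N_o / 2, and N_o is even. -/
namespace Meander17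

set_option maxHeartbeats 1000000



lemma take_sum_mono (l : List ℕ) {i k : ℕ} (h : i ≤ k) :
    (l.take i).sum ≤ (l.take k).sum := by
  have : l.take k = l.take i ++ (l.drop i).take (k - i) := by
    rw [← List.take_add]; congr 1; omega
  rw [this, List.sum_append]; omega

lemma sum_take_succ' (l : List ℕ) {i : ℕ} (h : i < l.length) :
    (l.take (i+1)).sum = (l.take i).sum + l.getD i 0 := by
  rw [List.sum_take_succ l i h, List.getD_eq_getElem l 0 h]

lemma block_le_sum (l : List ℕ) {i : ℕ} (h : i < l.length) :
    (l.take i).sum + l.getD i 0 ≤ l.sum := by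
  rw [← sum_take_succ' l h]
  conv_rhs => rw [← List.take_append_drop (i+1) l, List.sum_append]
  omega

lemma block_disj (l : List ℕ) {i k : ℕ} (hik : i < k) (hk : k ≤ l.length) :
    (l.take i).sum + l.getD i 0 ≤ (l.take k).sum := by
  have h1 : i < l.length := lt_of_lt_of_le hik hk
  rw [← sum_take_succ' l h1]
  exact take_sum_mono l hik

lemma block_unique (l : List ℕ) {i k v : ℕ} (hi : i < l.length) (hk : k < l.length)
    (h1 : (l.take i).sum ≤ v) (h2 : v < (l.take i).sum + l.getD i 0)
    (h3 : (l.take k).sum ≤ v) (h4 : v < (l.take k).sum + l.getD k 0) : i = k := by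
  rcases lt_trichotomy i k with h | h | h
  · have := block_disj l h (le_of_lt hk); omega
  · exact h
  · have := block_disj l h (le_of_lt hi); omega

lemma block_exists (l : List ℕ) {v : ℕ} (hv : v < l.sum) :
    ∃ i < l.length, (l.take i).sum ≤ v ∧ v < (l.take i).sum + l.getD i 0 := by
  induction l generalizing v with
  | nil => simp at hv
  | cons a l ih =>
    rcases Nat.lt_or_ge v a with h | h
    · exact ⟨0, by simp, by simp, by simpa using h⟩
    · have hv' : v - a < l.sum := by simp at hv; omega
      obtain ⟨i, hi, h1, h2⟩ := ih hv'
      refine ⟨i + 1, by simpa using hi, ?_, ?_⟩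
      · simpa using by omega
      · have : ((a :: l).take (i+1)).sum = a + (l.take i).sum := by simp
        rw [this, List.getD_cons_succ]; omega

lemma length_le_sum {l : List ℕ} (h : ∀ x ∈ l, 1 ≤ x) : l.length ≤ l.sum := by
  induction l with
  | nil => simp
  | cons a t ih =>
    have := h a (by simp)
    have := ih (fun x hx => h x (by simp [hx]))
    simp; omega

section Parts

variable {j : ℕ} (hj2 : 2 ≤ j)

lemma blockArc_elim {l : List ℕ} (hl : ∀ x ∈ l, x = 1 ∨ x = j) {u v : ℕ}
    (h : BlockArc l u v) :
    ∃ i < l.length, l.getD i 0 = j ∧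
      (l.take i).sum ≤ u ∧ u < (l.take i).sum + j ∧
      (l.take i).sum ≤ v ∧ v < (l.take i).sum + j ∧
      u + v + 1 = 2 * (l.take i).sum + j ∧ 2 * u + 1 ≠ 2 * (l.take i).sum + j := by
  obtain ⟨i, hi, t, ht, hu, hv⟩ := h
  have hmem : l.getD i 0 ∈ l := by
    rw [List.getD_eq_getElem l 0 hi]; exact List.getElem_mem _
  have hp : l.getD i 0 = j := by rcases hl _ hmem with h | h <;> omega
  rw [hp] at ht hv
  exact ⟨i, hi, hp, by omega, by omega, by omega, by omega, by omega, by omega⟩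

lemma blockArc_intro {l : List ℕ} {i u v : ℕ} (hi : i < l.length)
    (hp : l.getD i 0 = j)
    (hu1 : (l.take i).sum ≤ u) (hu2 : u < (l.take i).sum + j)
    (hsum : u + v + 1 = 2 * (l.take i).sum + j)
    (hmid : 2 * u + 1 ≠ 2 * (l.take i).sum + j) :
    BlockArc l u v ∨ BlockArc l v u := by
  set S := (l.take i).sum with hS
  rcases Nat.lt_or_ge (2 * (u - S) + 1) j with h | h
  · left; exact ⟨i, hi, u - S, by omega, by omega, by omega⟩
  · right; exact ⟨i, hi, v - S, by omega, by omega, by omega⟩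

lemma covered_elim {l : List ℕ} (hl : ∀ x ∈ l, x = 1 ∨ x = j) {v i : ℕ}
    (hc : Covered l v) (hi : i < l.length)
    (h1 : (l.take i).sum ≤ v) (h2 : v < (l.take i).sum + l.getD i 0) :
    l.getD i 0 = j ∧ 2 * v + 1 ≠ 2 * (l.take i).sum + j ∧
      ∃ w, (BlockArc l v w ∨ BlockArc l w v) ∧
        w + v + 1 = 2 * (l.take i).sum + j := by
  obtain ⟨u, hu⟩ := hc
  have key : ∃ k < l.length, l.getD k 0 = j ∧
      (l.take k).sum ≤ v ∧ v < (l.take k).sum + j ∧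
      u + v + 1 = 2 * (l.take k).sum + j ∧ 2 * v + 1 ≠ 2 * (l.take k).sum + j := by
    rcases hu with h | h
    · obtain ⟨k, hk, hp, _, _, c1, c2, c3, c4⟩ := blockArc_elim hl h
      exact ⟨k, hk, hp, c1, c2, by omega, by omega⟩
    · obtain ⟨k, hk, hp, c1, c2, _, _, c3, c4⟩ := blockArc_elim hl h
      exact ⟨k, hk, hp, c1, c2, by omega, by omega⟩
  obtain ⟨k, hk, hp, k1, k2, k3, k4⟩ := key
  have hik : i = k := block_unique l hi hk h1 h2 k1 (by rw [hp]; omega)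
  subst hik
  exact ⟨hp, k4, u, by tauto, k3⟩

lemma covered_block {l : List ℕ} (hl : ∀ x ∈ l, x = 1 ∨ x = j) {v : ℕ}
    (hc : Covered l v) :
    ∃ i < l.length, l.getD i 0 = j ∧
      (l.take i).sum ≤ v ∧ v < (l.take i).sum + j := by
  obtain ⟨u, hu⟩ := hc
  rcases hu with h | h
  · obtain ⟨k, hk, hp, _, _, c1, c2, _, _⟩ := blockArc_elim hl h
    exact ⟨k, hk, hp, c1, c2⟩
  · obtain ⟨k, hk, hp, c1, c2, _, _, _, _⟩ := blockArc_elim hl h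
    exact ⟨k, hk, hp, c1, c2⟩

lemma blockArc_lt_sum {l : List ℕ} (hl : ∀ x ∈ l, x = 1 ∨ x = j) {u v : ℕ}
    (h : BlockArc l u v) : u < l.sum ∧ v < l.sum := by
  obtain ⟨i, hi, hp, c1, c2, c3, c4, _, _⟩ := blockArc_elim hl h
  have := block_le_sum l hi
  rw [hp] at this
  omega

end Parts



section Ctx

variable {n j : ℕ} {lam mu : List ℕ}

lemma parts_pos (hj2 : 2 ≤ j) (hlp : ∀ x ∈ lam, x = 1 ∨ x = j) :
    ∀ x ∈ lam, 1 ≤ x := fun x hx => by rcases hlp x hx with h | h <;> omega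

lemma starts_ne (hj2 : 2 ≤ j) (hms : mu.sum = n)
    (hmp : ∀ x ∈ mu, x = 1 ∨ x = j)
    (hheadm : mu.head? = some 1)
    (hind : PSums lam ∩ PSums mu = {n})
    {iA iB : ℕ} (hiA : iA < lam.length) (hiB : iB < mu.length)
    (hpB : mu.getD iB 0 = j) :
    (lam.take iA).sum ≠ (mu.take iB).sum := by
  intro heq
  rcases Nat.eq_zero_or_pos (mu.take iB).sum with h0 | hpos
  · -- then iB = 0, but mu starts with 1
    have hlen : iB ≤ (mu.take iB).sum := by
      have : (mu.take iB).length ≤ (mu.take iB).sum :=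
        length_le_sum (fun x hx => by
          rcases hmp x (List.mem_of_mem_take hx) with h | h <;> omega)
      rwa [List.length_take, min_eq_left (le_of_lt hiB)] at this
    have hiB0 : iB = 0 := by omega
    subst hiB0
    cases mu with
    | nil => simp at hiB
    | cons a t =>
      simp only [List.head?_cons, Option.some.injEq] at hheadm
      simp [hheadm] at hpB
      omega
  · -- positive common partial sum
    have hmem : (mu.take iB).sum ∈ PSums lam ∩ PSums mu := by
      constructor
      · refine ⟨iA, ?_, le_of_lt hiA, heq⟩
        by_contra h
        have : iA = 0 := by omega
        subst this; simp at heq; omega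
      · refine ⟨iB, ?_, le_of_lt hiB, rfl⟩
        by_contra h
        have : iB = 0 := by omega
        subst this; simp at hpos
    rw [hind, Set.mem_singleton_iff] at hmem
    have := block_le_sum mu hiB
    rw [hpB, hms] at this
    omega

lemma adj_of_blockArc {u v : Fin n}
    (h : (BlockArc lam (u:ℕ) (v:ℕ) ∨ BlockArc mu (u:ℕ) (v:ℕ)) ∨
         (BlockArc lam (v:ℕ) (u:ℕ) ∨ BlockArc mu (v:ℕ) (u:ℕ)))
    (hne : (u:ℕ) ≠ (v:ℕ)) : (MeanderGraph n lam mu).Adj u v := by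
  rw [MeanderGraph, SimpleGraph.fromRel_adj]
  exact ⟨fun h' => hne (by rw [h']), h⟩


lemma endgame {j : ℕ} (hj : j = 2 ∨ j = 3 ∨ j = 4 ∨ j = 5 ∨ j = 7)
    (P : ℕ → Prop) (SA SB M : ℕ) (hSne : SA ≠ SB)
    (stepA : ∀ v, P v → SA ≤ v → v < SA + j →
      (2 * v + 1 ≠ 2 * SA + j ∧ ∃ w, P w ∧ w + v + 1 = 2 * SA + j ∧ w ≤ M))
    (stepB : ∀ v, P v → SB ≤ v → v < SB + j →
      (2 * v + 1 ≠ 2 * SB + j ∧ ∃ w, P w ∧ w + v + 1 = 2 * SB + j ∧ w ≤ M))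
    (hPM : P M) (hA1 : SA ≤ M) (hA2 : M < SA + j) (hB1 : SB ≤ M) (hB2 : M < SB + j) :
    False := by
  obtain ⟨hmidA, wA, hwAP, hwAsum, hwAle⟩ := stepA M hPM hA1 hA2
  obtain ⟨hmidB, wB, hwBP, hwBsum, hwBle⟩ := stepB M hPM hB1 hB2
  rcases hj with rfl | rfl | rfl | rfl | rfl
  · omega
  · omega
  · -- j = 4
    rcases (by omega : (M = SA + 3 ∧ M = SB + 2) ∨ (M = SA + 2 ∧ M = SB + 3)) with
      ⟨h1, h2⟩ | ⟨h1, h2⟩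
    · obtain ⟨hm2, w2, hw2P, hw2sum, hw2le⟩ := stepA wB hwBP (by omega) (by omega)
      obtain ⟨hm3, w3, hw3P, hw3sum, hw3le⟩ := stepB w2 hw2P (by omega) (by omega)
      omega
    · obtain ⟨hm2, w2, hw2P, hw2sum, hw2le⟩ := stepB wA hwAP (by omega) (by omega)
      obtain ⟨hm3, w3, hw3P, hw3sum, hw3le⟩ := stepA w2 hw2P (by omega) (by omega)
      omega
  · -- j = 5
    rcases (by omega : (M = SA + 4 ∧ M = SB + 3) ∨ (M = SA + 3 ∧ M = SB + 4)) with
      ⟨h1, h2⟩ | ⟨h1, h2⟩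
    · obtain ⟨hm2, w2, hw2P, hw2sum, hw2le⟩ := stepA wB hwBP (by omega) (by omega)
      omega
    · obtain ⟨hm2, w2, hw2P, hw2sum, hw2le⟩ := stepB wA hwAP (by omega) (by omega)
      omega
  · -- j = 7
    rcases (by omega : (M = SA + 6 ∧ M = SB + 5) ∨ (M = SA + 5 ∧ M = SB + 6) ∨
        (M = SA + 6 ∧ M = SB + 4) ∨ (M = SA + 4 ∧ M = SB + 6) ∨
        (M = SA + 5 ∧ M = SB + 4) ∨ (M = SA + 4 ∧ M = SB + 5)) with
      ⟨h1, h2⟩ | ⟨h1, h2⟩ | ⟨h1, h2⟩ | ⟨h1, h2⟩ | ⟨h1, h2⟩ | ⟨h1, h2⟩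
    · obtain ⟨hm2, w2, hw2P, hw2sum, hw2le⟩ := stepA wB hwBP (by omega) (by omega)
      obtain ⟨hm3, w3, hw3P, hw3sum, hw3le⟩ := stepB w2 hw2P (by omega) (by omega)
      omega
    · obtain ⟨hm2, w2, hw2P, hw2sum, hw2le⟩ := stepB wA hwAP (by omega) (by omega)
      obtain ⟨hm3, w3, hw3P, hw3sum, hw3le⟩ := stepA w2 hw2P (by omega) (by omega)
      omega
    · obtain ⟨hm2, w2, hw2P, hw2sum, hw2le⟩ := stepA wB hwBP (by omega) (by omega)
      obtain ⟨hm3, w3, hw3P, hw3sum, hw3le⟩ := stepB w2 hw2P (by omega) (by omega)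
      omega
    · obtain ⟨hm2, w2, hw2P, hw2sum, hw2le⟩ := stepB wA hwAP (by omega) (by omega)
      obtain ⟨hm3, w3, hw3P, hw3sum, hw3le⟩ := stepA w2 hw2P (by omega) (by omega)
      omega
    · obtain ⟨hm2, w2, hw2P, hw2sum, hw2le⟩ := stepB wA hwAP (by omega) (by omega)
      omega
    · obtain ⟨hm2, w2, hw2P, hw2sum, hw2le⟩ := stepA wB hwBP (by omega) (by omega)
      omega

lemma core {n j : ℕ} {lam mu : List ℕ}
    (hj : j = 2 ∨ j = 3 ∨ j = 4 ∨ j = 5 ∨ j = 7)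
    (hlp : ∀ x ∈ lam, x = 1 ∨ x = j) (hmp : ∀ x ∈ mu, x = 1 ∨ x = j)
    (hls : lam.sum = n) (hms : mu.sum = n)
    (hheadm : mu.head? = some 1)
    (hind : PSums lam ∩ PSums mu = {n})
    (K : Set (Fin n)) (hne : K.Nonempty)
    (hcov : ∀ v ∈ K, Covered lam (v:ℕ) ∧ Covered mu (v:ℕ))
    (hcl : ∀ v ∈ K, ∀ w : Fin n, (MeanderGraph n lam mu).Adj v w → w ∈ K) :
    False := by
  have hj2 : 2 ≤ j := by omega
  obtain ⟨M, hMK, hMmax⟩ :=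
    Set.Finite.exists_maximalFor (fun v : Fin n => v) K (Set.toFinite K) hne
  have hmax : ∀ v ∈ K, (v:ℕ) ≤ (M:ℕ) := by
    intro v hv
    rcases le_total v M with h | h
    · exact h
    · exact hMmax hv h
  set P : ℕ → Prop := fun v => ∃ w : Fin n, (w:ℕ) = v ∧ w ∈ K with hP
  have step : ∀ (l : List ℕ), (l = lam ∨ l = mu) → ∀ i, (hi : i < l.length) → l.getD i 0 = j →
      ∀ v, P v → (l.take i).sum ≤ v → v < (l.take i).sum + j →
      (2 * v + 1 ≠ 2 * (l.take i).sum + j ∧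
        ∃ w, P w ∧ w + v + 1 = 2 * (l.take i).sum + j ∧ w ≤ (M:ℕ)) := by
    rintro l hside i hi hgd v ⟨vf, rfl, hv⟩ h1 h2
    have hlp' : ∀ x ∈ l, x = 1 ∨ x = j := by rcases hside with rfl | rfl <;> assumption
    have hcv : Covered l (vf:ℕ) := by
      rcases hside with rfl | rfl
      exacts [(hcov vf hv).1, (hcov vf hv).2]
    obtain ⟨hmid, w, harc, hsum⟩ := (covered_elim hlp' hcv hi h1 (by omega)).2
    have hwn : w < n := by
      have hsl : l.sum = n := by rcases hside with rfl | rfl <;> assumption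
      rcases harc with h | h
      · exact hsl ▸ (blockArc_lt_sum hlp' h).2
      · exact hsl ▸ (blockArc_lt_sum hlp' h).1
    refine ⟨hmid, w, ⟨⟨w, hwn⟩, rfl, ?_⟩, hsum, ?_⟩
    · -- membership in K via adjacency
      apply hcl vf hv
      apply adj_of_blockArc _ (by simp only []; omega)
      rcases hside with rfl | rfl
      · rcases harc with h | h
        · exact Or.inl (Or.inl h)
        · exact Or.inr (Or.inl h)
      · rcases harc with h | h
        · exact Or.inl (Or.inr h)
        · exact Or.inr (Or.inr h)
    · -- w ≤ M : w's vertex is in K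
      have hWK : (⟨w, hwn⟩ : Fin n) ∈ K := by
        apply hcl vf hv
        apply adj_of_blockArc _ (by simp only []; omega)
        rcases hside with rfl | rfl
        · rcases harc with h | h
          · exact Or.inl (Or.inl h)
          · exact Or.inr (Or.inl h)
        · rcases harc with h | h
          · exact Or.inl (Or.inr h)
          · exact Or.inr (Or.inr h)
      exact hmax _ hWK
  obtain ⟨iA, hiA, hpA, hA1, hA2⟩ := covered_block hlp (hcov M hMK).1
  obtain ⟨iB, hiB, hpB, hB1, hB2⟩ := covered_block hmp (hcov M hMK).2
  exact endgame hj P (lam.take iA).sum (mu.take iB).sum (M:ℕ)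
    (starts_ne hj2 hms hmp hheadm hind hiA hiB hpB)
    (step lam (Or.inl rfl) iA hiA hpA) (step mu (Or.inr rfl) iB hiB hpB)
    ⟨M, rfl, hMK⟩ hA1 hA2 hB1 hB2

end Ctx

lemma countP_eq_card_filter_range (l : List ℕ) (f : ℕ → Bool) :
    l.countP f = ((Finset.range l.length).filter (fun i => f (l.getD i 0) = true)).card := by
  induction l with
  | nil => simp
  | cons a t ih =>
    rw [List.countP_cons, ih, Finset.card_filter, Finset.card_filter, List.length_cons,
      Finset.sum_range_succ']
    simp [List.getD_cons_succ, List.getD_cons_zero]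

lemma card_fin_filter (n : ℕ) (P : ℕ → Prop) [DecidablePred P] :
    {v : Fin n | P (v:ℕ)}.ncard = ((Finset.range n).filter P).card := by
  classical
  rw [Set.ncard_eq_toFinset_card', Set.toFinset_setOf]
  refine Finset.card_bij (i := fun v _ => (v:ℕ)) ?_ ?_ ?_
  · intro v hv
    simp only [Finset.mem_filter, Finset.mem_univ, true_and] at hv
    simp only [Finset.mem_filter, Finset.mem_range]
    exact ⟨v.isLt, hv⟩
  · intro v1 _ v2 _ h
    exact Fin.ext h
  · intro a ha
    simp only [Finset.mem_filter, Finset.mem_range] at ha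
    exact ⟨⟨a, ha.1⟩, by simp [ha.2], rfl⟩

lemma count_uncov {n j : ℕ} (hj2 : 2 ≤ j) {l : List ℕ}
    (hl : ∀ x ∈ l, x = 1 ∨ x = j) (hls : l.sum = n) :
    {v : Fin n | ¬ Covered l (v:ℕ)}.ncard = l.countP (fun p => p % 2 == 1) := by
  classical
  rw [card_fin_filter n (fun v => ¬ Covered l v), countP_eq_card_filter_range]
  refine (Finset.card_bij
    (i := fun i _ => (l.take i).sum + (l.getD i 0 - 1)/2) ?_ ?_ ?_).symm
  · -- maps into uncovered positions
    intro i hi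
    simp only [Finset.mem_filter, Finset.mem_range, beq_iff_eq] at hi
    obtain ⟨hi1, hi2⟩ := hi
    have hble := block_le_sum l hi1
    have hp : l.getD i 0 = 1 ∨ l.getD i 0 = j := by
      apply hl
      rw [List.getD_eq_getElem l 0 hi1]; exact List.getElem_mem _
    simp only [Finset.mem_filter, Finset.mem_range]
    constructor
    · omega
    · intro hcov
      have hint1 : (l.take i).sum ≤ (l.take i).sum + (l.getD i 0 - 1)/2 := by omega
      have hint2 : (l.take i).sum + (l.getD i 0 - 1)/2
          < (l.take i).sum + l.getD i 0 := by omega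
      have := covered_elim hl hcov hi1 hint1 hint2
      omega
  · -- injective
    intro i1 h1 i2 h2 heq
    simp only [Finset.mem_filter, Finset.mem_range] at h1 h2
    have hp1 : l.getD i1 0 = 1 ∨ l.getD i1 0 = j := by
      apply hl
      rw [List.getD_eq_getElem l 0 h1.1]; exact List.getElem_mem _
    have hp2 : l.getD i2 0 = 1 ∨ l.getD i2 0 = j := by
      apply hl
      rw [List.getD_eq_getElem l 0 h2.1]; exact List.getElem_mem _
    exact block_unique l (v := (l.take i1).sum + (l.getD i1 0 - 1)/2) h1.1 h2.1
      (by omega) (by omega) (by omega) (by omega)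
  · -- surjective
    intro v hv
    simp only [Finset.mem_filter, Finset.mem_range] at hv
    obtain ⟨hvn, hv⟩ := hv
    obtain ⟨i, hi, hb1, hb2⟩ := block_exists l (by omega : v < l.sum)
    have hp : l.getD i 0 = 1 ∨ l.getD i 0 = j := by
      apply hl
      rw [List.getD_eq_getElem l 0 hi]; exact List.getElem_mem _
    have hodd : l.getD i 0 % 2 = 1 ∧ v = (l.take i).sum + (l.getD i 0 - 1)/2 := by
      rcases hp with hp | hp
      · omega
      · by_contra hcon
        apply hv
        have hmid : 2 * v + 1 ≠ 2 * (l.take i).sum + j := by omega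
        obtain harc := blockArc_intro hi hp hb1 (by omega)
          (v := 2 * (l.take i).sum + j - 1 - v) (by omega) hmid
        exact ⟨_, harc.symm⟩
    refine ⟨i, ?_, hodd.2.symm⟩
    simp only [Finset.mem_filter, Finset.mem_range, beq_iff_eq]
    exact ⟨hi, hodd.1⟩


section GenericGraph
open SimpleGraph
variable {V : Type*}

lemma reach_split (G : SimpleGraph V) (a b : V) {u v : V} (h : G.Reachable u v) :
    (G \ fromEdgeSet {s(a,b)}).Reachable u v ∨
    ((G \ fromEdgeSet {s(a,b)}).Reachable u a ∧ (G \ fromEdgeSet {s(a,b)}).Reachable b v) ∨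
    ((G \ fromEdgeSet {s(a,b)}).Reachable u b ∧ (G \ fromEdgeSet {s(a,b)}).Reachable a v) := by
  obtain ⟨w⟩ := h
  induction w with
  | nil => exact Or.inl (Reachable.refl _)
  | @cons u x v h q ih =>
    by_cases he : s(u, x) = s(a, b)
    · rw [Sym2.eq_iff] at he
      rcases he with ⟨rfl, rfl⟩ | ⟨rfl, rfl⟩
      · rcases ih with h1 | ⟨h2, h3⟩ | ⟨h2, h3⟩
        · exact Or.inr (Or.inl ⟨Reachable.refl _, h1⟩)
        · exact Or.inr (Or.inl ⟨Reachable.refl _, h3⟩)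
        · exact Or.inl h3
      · rcases ih with h1 | ⟨h2, h3⟩ | ⟨h2, h3⟩
        · exact Or.inr (Or.inr ⟨Reachable.refl _, h1⟩)
        · exact Or.inl h3
        · exact Or.inr (Or.inr ⟨Reachable.refl _, h3⟩)
    · have hadj : (G \ fromEdgeSet {s(a,b)}).Adj u x := by
        rw [sdiff_adj, fromEdgeSet_adj]
        exact ⟨h, fun hc => he (by simpa using hc.1)⟩
      rcases ih with h1 | ⟨h2, h3⟩ | ⟨h2, h3⟩
      · exact Or.inl (hadj.reachable.trans h1)
      · exact Or.inr (Or.inl ⟨hadj.reachable.trans h2, h3⟩)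
      · exact Or.inr (Or.inr ⟨hadj.reachable.trans h2, h3⟩)

lemma card_cc_delete [Fintype V] (G : SimpleGraph V) {a b : V} (hab : G.Adj a b)
    (hnr : ¬ (G \ fromEdgeSet {s(a,b)}).Reachable a b) :
    Nat.card (G \ fromEdgeSet {s(a,b)}).ConnectedComponent =
      Nat.card G.ConnectedComponent + 1 := by
  classical
  set G' := G \ fromEdgeSet {s(a,b)} with hG'
  have hle : G' ≤ G := sdiff_le
  set F : G'.ConnectedComponent → G.ConnectedComponent :=
    ConnectedComponent.map (Hom.ofLE hle) with hF
  have hFmk : ∀ v : V, F (G'.connectedComponentMk v) = G.connectedComponentMk v :=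
    fun v => rfl
  letI : Fintype G'.ConnectedComponent := Fintype.ofFinite _
  letI : Fintype G.ConnectedComponent := Fintype.ofFinite _
  rw [Nat.card_eq_fintype_card, Nat.card_eq_fintype_card]
  rw [← Finset.card_univ (α := G'.ConnectedComponent),
    Finset.card_eq_sum_card_fiberwise (f := F) (t := Finset.univ) (fun x _ => Finset.mem_univ _)]
  have key : ∀ c : G.ConnectedComponent,
      (Finset.univ.filter (fun c' => F c' = c)).card
        = 1 + (if c = G.connectedComponentMk a then 1 else 0) := by
    intro c
    by_cases hc : c = G.connectedComponentMk a
    · subst hc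
      rw [if_pos rfl]
      have hset : (Finset.univ.filter (fun c' => F c' = G.connectedComponentMk a))
          = {G'.connectedComponentMk a, G'.connectedComponentMk b} := by
        ext c'
        simp only [Finset.mem_filter, Finset.mem_univ, true_and, Finset.mem_insert,
          Finset.mem_singleton]
        constructor
        · intro hc'
          obtain ⟨v, rfl⟩ := c'.exists_rep
          have hr : G.Reachable v a := ConnectedComponent.eq.mp hc'
          rcases reach_split G a b hr with h1 | ⟨h2, _⟩ | ⟨h2, _⟩
          · exact Or.inl (ConnectedComponent.sound h1)
          · exact Or.inl (ConnectedComponent.sound h2)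
          · exact Or.inr (ConnectedComponent.sound h2)
        · rintro (rfl | rfl)
          · exact rfl
          · exact ConnectedComponent.sound hab.reachable.symm
      rw [hset, Finset.card_pair]
      intro hc
      exact hnr (ConnectedComponent.eq.mp hc)
    · rw [if_neg hc, Finset.card_eq_one]
      obtain ⟨v, rfl⟩ := c.exists_rep
      refine ⟨G'.connectedComponentMk v, ?_⟩
      ext c'
      simp only [Finset.mem_filter, Finset.mem_univ, true_and, Finset.mem_singleton]
      constructor
      · intro hc'
        obtain ⟨u, rfl⟩ := c'.exists_rep
        have hr : G.Reachable u v := ConnectedComponent.eq.mp hc'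
        rcases reach_split G a b hr with h1 | ⟨h2, _⟩ | ⟨h2, _⟩
        · exact ConnectedComponent.sound h1
        · exact absurd (((ConnectedComponent.eq.mpr
            (h2.map (Hom.ofLE hle))).symm.trans hc').symm) hc
        · refine absurd ((((ConnectedComponent.eq.mpr
            (h2.map (Hom.ofLE hle))).symm.trans hc').symm).trans
            (ConnectedComponent.sound hab.reachable.symm)) hc
      · rintro rfl
        exact rfl
  rw [Finset.sum_congr rfl (fun c _ => key c), Finset.sum_add_distrib]
  rw [Finset.sum_ite_eq' Finset.univ (G.connectedComponentMk a) (fun _ => 1)]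
  simp

lemma isAcyclic_mono {G H : SimpleGraph V} (hle : G ≤ H) (h : H.IsAcyclic) :
    G.IsAcyclic := by
  intro v c hc
  exact h (SimpleGraph.Walk.mapLe hle c) (hc.mapLe hle)

lemma reachable_bot' {u v : V} (h : (⊥ : SimpleGraph V).Reachable u v) : u = v := by
  obtain ⟨w⟩ := h
  cases w with
  | nil => rfl
  | cons h _ => exact absurd h (by simp)

lemma forest_card [Fintype V] (G : SimpleGraph V) (hG : G.IsAcyclic) :
    Fintype.card V = Nat.card G.ConnectedComponent + Nat.card G.edgeSet := by
  classical
  suffices H : ∀ (m : ℕ) (G : SimpleGraph V), G.IsAcyclic → Nat.card G.edgeSet = m →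
      Fintype.card V = Nat.card G.ConnectedComponent + m by
    exact H _ G hG rfl
  intro m
  induction m with
  | zero =>
    intro G hG hm
    have hE : G.edgeSet = ∅ := by
      have : Finite G.edgeSet := Finite.Set.subset _ (Set.subset_univ _)
      rcases Nat.card_eq_zero.mp hm with h | h
      · exact Set.eq_empty_iff_forall_notMem.mpr (fun e he => (h.false ⟨e, he⟩))
      · exact absurd h (not_infinite_iff_finite.mpr this)
    have hbot : G = ⊥ := edgeSet_eq_empty.mp hE
    subst hbot
    have hbij : Function.Bijective
        (fun v => (⊥ : SimpleGraph V).connectedComponentMk v) :=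
      ⟨fun u v h => reachable_bot' (ConnectedComponent.eq.mp h),
       fun c => c.exists_rep.imp (fun v hv => hv)⟩
    have hcc : Nat.card V = Nat.card (⊥ : SimpleGraph V).ConnectedComponent :=
      Nat.card_eq_of_bijective _ hbij
    rw [Nat.card_eq_fintype_card] at hcc
    omega
  | succ m ih =>
    intro G hG hm
    have hpos : 0 < Nat.card G.edgeSet := by omega
    obtain ⟨⟨e, he⟩⟩ := Nat.card_pos_iff.mp hpos |>.1
    induction e with
    | h a b =>
      have hab : G.Adj a b := (mem_edgeSet G).mp he
      have hbr := (isAcyclic_iff_forall_adj_isBridge.mp hG) hab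
      have hnr : ¬ (G \ fromEdgeSet {s(a,b)}).Reachable a b := (isBridge_iff.mp hbr)
      set G' := G \ fromEdgeSet {s(a,b)} with hG'def
      have hG'le : G' ≤ G := sdiff_le
      have hG'ac : G'.IsAcyclic := isAcyclic_mono hG'le hG
      have hE' : G'.edgeSet = G.edgeSet \ {s(a,b)} := by
        rw [hG'def, edgeSet_sdiff, edgeSet_fromEdgeSet, edgeSet_sdiff_sdiff_isDiag]
      have hcard' : Nat.card G'.edgeSet = m := by
        rw [Nat.card_coe_set_eq] at hm ⊢
        rw [hE', Set.ncard_diff_singleton_of_mem he, hm]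
        omega
      have := ih G' hG'ac hcard'
      rw [card_cc_delete G hab hnr] at this
      omega


end GenericGraph

section MeanderSpecific
open SimpleGraph
section Graph

variable {n j : ℕ} {lam mu : List ℕ}

lemma arc_block {j : ℕ} {l : List ℕ} (hl : ∀ x ∈ l, x = 1 ∨ x = j) {v w : ℕ}
    (h : BlockArc l v w ∨ BlockArc l w v) :
    ∃ i < l.length, l.getD i 0 = j ∧
      (l.take i).sum ≤ v ∧ v < (l.take i).sum + j ∧
      w + v + 1 = 2 * (l.take i).sum + j := by
  rcases h with h | h
  · obtain ⟨i, hi, hp, a1, a2, a3, a4, a5, a6⟩ := blockArc_elim hl h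
    exact ⟨i, hi, hp, a1, a2, by omega⟩
  · obtain ⟨i, hi, hp, a1, a2, a3, a4, a5, a6⟩ := blockArc_elim hl h
    exact ⟨i, hi, hp, a3, a4, by omega⟩

lemma arc_unique {j : ℕ} {l : List ℕ} (hl : ∀ x ∈ l, x = 1 ∨ x = j) {v w1 w2 : ℕ}
    (h1 : BlockArc l v w1 ∨ BlockArc l w1 v)
    (h2 : BlockArc l v w2 ∨ BlockArc l w2 v) : w1 = w2 := by
  obtain ⟨i1, hi1, hp1, b1, b2, b3⟩ := arc_block hl h1
  obtain ⟨i2, hi2, hp2, c1, c2, c3⟩ := arc_block hl h2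
  have : i1 = i2 := block_unique l hi1 hi2 b1 (by omega) c1 (by omega)
  subst this
  omega

lemma covered_of_arc {l : List ℕ} {v w : ℕ}
    (h : BlockArc l v w ∨ BlockArc l w v) : Covered l v := ⟨w, h.symm⟩

lemma adj_elim {u v : Fin n} (h : (MeanderGraph n lam mu).Adj u v) :
    (BlockArc lam (u:ℕ) (v:ℕ) ∨ BlockArc lam (v:ℕ) (u:ℕ)) ∨
    (BlockArc mu (u:ℕ) (v:ℕ) ∨ BlockArc mu (v:ℕ) (u:ℕ)) := by
  rw [MeanderGraph, SimpleGraph.fromRel_adj] at h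
  tauto

variable (hj2 : 2 ≤ j) (hlp : ∀ x ∈ lam, x = 1 ∨ x = j)
  (hmp : ∀ x ∈ mu, x = 1 ∨ x = j)
  (hls : lam.sum = n) (hms : mu.sum = n)
  (hheadm : mu.head? = some 1)
  (hind : PSums lam ∩ PSums mu = {n})

include hj2 hlp hmp hls hms hheadm hind in
/-- The unique partner on a covered side, as a `Fin n` vertex. -/
lemma exists_partner {v : Fin n} (l : List ℕ) (hside : l = lam ∨ l = mu)
    (hc : Covered l (v:ℕ)) :
    ∃ w : Fin n, (BlockArc l (v:ℕ) (w:ℕ) ∨ BlockArc l (w:ℕ) (v:ℕ)) ∧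
      (MeanderGraph n lam mu).Adj v w := by
  have hlp' : ∀ x ∈ l, x = 1 ∨ x = j := by rcases hside with rfl | rfl <;> assumption
  have hsl : l.sum = n := by rcases hside with rfl | rfl <;> assumption
  obtain ⟨i, hi, hp, hb1, hb2⟩ := covered_block hlp' hc
  obtain ⟨_, hmid, w, harc, hsum⟩ := covered_elim hlp' hc hi hb1 (by omega)
  have hwn : w < n := by
    rcases harc with h | h
    · exact hsl ▸ (blockArc_lt_sum hlp' h).2
    · exact hsl ▸ (blockArc_lt_sum hlp' h).1
  refine ⟨⟨w, hwn⟩, harc, ?_⟩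
  apply adj_of_blockArc _ (by simp only []; omega)
  rcases hside with rfl | rfl
  · rcases harc with h | h
    · exact Or.inl (Or.inl h)
    · exact Or.inr (Or.inl h)
  · rcases harc with h | h
    · exact Or.inl (Or.inr h)
    · exact Or.inr (Or.inr h)

include hj2 hlp hmp hls hms hheadm hind in
lemma not_both_partners {v w : Fin n}
    (h1 : BlockArc lam (v:ℕ) (w:ℕ) ∨ BlockArc lam (w:ℕ) (v:ℕ))
    (h2 : BlockArc mu (v:ℕ) (w:ℕ) ∨ BlockArc mu (w:ℕ) (v:ℕ)) : False := by
  obtain ⟨i1, hi1, hp1, b1, b2, b3⟩ := arc_block hlp h1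
  obtain ⟨i2, hi2, hp2, c1, c2, c3⟩ := arc_block hmp h2
  have hne := starts_ne hj2 hms hmp hheadm hind hi1 hi2 hp2
  omega

include hj2 hlp hmp hls hms hheadm hind in
lemma degree_eq [DecidableRel (MeanderGraph n lam mu).Adj] (v : Fin n)
    [Decidable (Covered lam (v:ℕ))] [Decidable (Covered mu (v:ℕ))] :
    (MeanderGraph n lam mu).degree v =
      (if Covered lam (v:ℕ) then 1 else 0) + (if Covered mu (v:ℕ) then 1 else 0) := by
  rw [← SimpleGraph.card_neighborFinset_eq_degree]
  by_cases hcl : Covered lam (v:ℕ) <;> by_cases hcm : Covered mu (v:ℕ)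
  · obtain ⟨wl, harcl, hadjl⟩ :=
      exists_partner hj2 hlp hmp hls hms hheadm hind lam (Or.inl rfl) hcl
    obtain ⟨wm, harcm, hadjm⟩ :=
      exists_partner hj2 hlp hmp hls hms hheadm hind mu (Or.inr rfl) hcm
    have hset : (MeanderGraph n lam mu).neighborFinset v = {wl, wm} := by
      ext w
      rw [SimpleGraph.mem_neighborFinset]
      constructor
      · intro hadj
        rcases adj_elim hadj with h | h
        · exact Finset.mem_insert.mpr (Or.inl (Fin.ext (arc_unique hlp h harcl)))
        · refine Finset.mem_insert.mpr (Or.inr (Finset.mem_singleton.mpr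
            (Fin.ext (arc_unique hmp h harcm))))
      · intro hw
        rcases Finset.mem_insert.mp hw with rfl | hw
        · exact hadjl
        · rw [Finset.mem_singleton] at hw
          subst hw
          exact hadjm
    rw [hset, if_pos hcl, if_pos hcm, Finset.card_pair]
    intro hEq
    exact not_both_partners hj2 hlp hmp hls hms hheadm hind harcl (hEq ▸ harcm)
  · obtain ⟨wl, harcl, hadjl⟩ :=
      exists_partner hj2 hlp hmp hls hms hheadm hind lam (Or.inl rfl) hcl
    have hset : (MeanderGraph n lam mu).neighborFinset v = {wl} := by
      ext w
      rw [SimpleGraph.mem_neighborFinset, Finset.mem_singleton]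
      constructor
      · intro hadj
        rcases adj_elim hadj with h | h
        · exact Fin.ext (arc_unique hlp h harcl)
        · exact absurd (covered_of_arc h) hcm
      · rintro rfl; exact hadjl
    rw [hset, if_pos hcl, if_neg hcm, Finset.card_singleton]
  · obtain ⟨wm, harcm, hadjm⟩ :=
      exists_partner hj2 hlp hmp hls hms hheadm hind mu (Or.inr rfl) hcm
    have hset : (MeanderGraph n lam mu).neighborFinset v = {wm} := by
      ext w
      rw [SimpleGraph.mem_neighborFinset, Finset.mem_singleton]
      constructor
      · intro hadj
        rcases adj_elim hadj with h | h
        · exact absurd (covered_of_arc h) hcl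
        · exact Fin.ext (arc_unique hmp h harcm)
      · rintro rfl; exact hadjm
    rw [hset, if_neg hcl, if_pos hcm, Finset.card_singleton]
  · have hset : (MeanderGraph n lam mu).neighborFinset v = ∅ := by
      ext w
      rw [SimpleGraph.mem_neighborFinset]
      simp only [Finset.notMem_empty, iff_false]
      intro hadj
      rcases adj_elim hadj with h | h
      · exact absurd (covered_of_arc h) hcl
      · exact absurd (covered_of_arc h) hcm
    rw [hset, if_neg hcl, if_neg hcm, Finset.card_empty]

end Graph

section Cycles

lemma closed_mem_support_tail {V : Type*} {G : SimpleGraph V} {w : V}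
    (p : G.Walk w w) (hnil : ¬ p.Nil) {z : V} (hz : z ∈ p.support) :
    z ∈ p.support.tail := by
  rw [SimpleGraph.Walk.support_eq_cons] at hz
  rcases List.mem_cons.mp hz with rfl | h
  · have hd : p.darts ≠ [] := by
      intro h
      apply hnil
      rw [SimpleGraph.Walk.nil_iff_length_eq, ← SimpleGraph.Walk.length_darts, h]
      rfl
    have hlast : (p.darts.getLast hd).toProd.2 = z :=
      by rw [SimpleGraph.Walk.getLast_darts_eq_lastDart]; rfl
    rw [← SimpleGraph.Walk.map_snd_darts]
    exact List.mem_map.mpr ⟨_, List.getLast_mem hd, hlast⟩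
  · exact h

lemma cycle_two_nbrs {V : Type*} [DecidableEq V] {G : SimpleGraph V} {v0 u : V}
    {c : G.Walk v0 v0} (hc : c.IsCycle) (hu : u ∈ c.support) :
    ∃ x y : V, x ≠ y ∧ G.Adj u x ∧ G.Adj u y ∧ x ∈ c.support ∧ y ∈ c.support := by
  set q := c.rotate u hu with hqdef
  have hq : q.IsCycle := hc.rotate hu
  have hmemq : ∀ z, z ∈ q.support → z ∈ c.support := by
    intro z hz
    have h1 : z ∈ q.support.tail := closed_mem_support_tail q hq.not_nil hz
    have h2 := (SimpleGraph.Walk.support_rotate c u hu).mem_iff.mp h1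
    rw [SimpleGraph.Walk.support_eq_cons]
    exact List.mem_cons_of_mem _ h2
  obtain ⟨b2, h1, q1, hq1⟩ := SimpleGraph.Walk.not_nil_iff.mp hq.not_nil
  have hlen : 2 ≤ q1.length := by
    have h3 := hq.three_le_length
    rw [hq1] at h3
    simpa using h3
  have hnil1 : ¬ q1.reverse.Nil := by
    rw [SimpleGraph.Walk.nil_iff_length_eq, SimpleGraph.Walk.length_reverse]
    omega
  obtain ⟨z, h2, q2, hq2⟩ := SimpleGraph.Walk.not_nil_iff.mp hnil1
  have hzq1 : z ∈ q1.support := by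
    have : z ∈ q1.reverse.support := by
      rw [hq2, SimpleGraph.Walk.support_cons]
      exact List.mem_cons_of_mem _ (SimpleGraph.Walk.start_mem_support q2)
    rwa [SimpleGraph.Walk.support_reverse, List.mem_reverse] at this
  have hzedge : s(u, z) ∈ q1.edges := by
    have : s(u, z) ∈ q1.reverse.edges := by
      rw [hq2, SimpleGraph.Walk.edges_cons]
      exact List.mem_cons_self
    rwa [SimpleGraph.Walk.edges_reverse, List.mem_reverse] at this
  refine ⟨b2, z, ?_, h1, h2, ?_, ?_⟩
  · intro heq
    have hnodup := hq.isTrail.edges_nodup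
    rw [hq1, SimpleGraph.Walk.edges_cons] at hnodup
    exact (List.nodup_cons.mp hnodup).1 (heq ▸ hzedge)
  · apply hmemq
    rw [hq1, SimpleGraph.Walk.support_cons]
    exact List.mem_cons_of_mem _ (SimpleGraph.Walk.start_mem_support q1)
  · apply hmemq
    rw [hq1, SimpleGraph.Walk.support_cons]
    exact List.mem_cons_of_mem _ hzq1

variable {n j : ℕ} {lam mu : List ℕ}
  (hj : j = 2 ∨ j = 3 ∨ j = 4 ∨ j = 5 ∨ j = 7)
  (hlp : ∀ x ∈ lam, x = 1 ∨ x = j)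
  (hmp : ∀ x ∈ mu, x = 1 ∨ x = j)
  (hls : lam.sum = n) (hms : mu.sum = n)
  (hheadm : mu.head? = some 1)
  (hind : PSums lam ∩ PSums mu = {n})

include hj hlp hmp hls hms hheadm hind in
lemma meander_acyclic : (MeanderGraph n lam mu).IsAcyclic := by
  intro v0 c hc
  set K : Set (Fin n) := {u | u ∈ c.support} with hK
  apply core hj hlp hmp hls hms hheadm hind K
    ⟨v0, SimpleGraph.Walk.start_mem_support c⟩
  · -- all doubly covered
    intro v hv
    obtain ⟨x, y, hxy, hax, hay, hxs, hys⟩ := cycle_two_nbrs hc hv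
    rcases adj_elim hax with h1 | h1 <;> rcases adj_elim hay with h2 | h2
    · exact absurd (Fin.ext (arc_unique hlp h1 h2)) hxy
    · exact ⟨covered_of_arc h1, covered_of_arc h2⟩
    · exact ⟨covered_of_arc h2, covered_of_arc h1⟩
    · exact absurd (Fin.ext (arc_unique hmp h1 h2)) hxy
  · -- closed under adjacency
    intro v hv w hw
    obtain ⟨x, y, hxy, hax, hay, hxs, hys⟩ := cycle_two_nbrs hc hv
    rcases adj_elim hax with h1 | h1 <;> rcases adj_elim hay with h2 | h2
    · exact absurd (Fin.ext (arc_unique hlp h1 h2)) hxy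
    · rcases adj_elim hw with h3 | h3
      · exact (Fin.ext (arc_unique hlp h3 h1) : w = x) ▸ hxs
      · exact (Fin.ext (arc_unique hmp h3 h2) : w = y) ▸ hys
    · rcases adj_elim hw with h3 | h3
      · exact (Fin.ext (arc_unique hlp h3 h2) : w = y) ▸ hys
      · exact (Fin.ext (arc_unique hmp h3 h1) : w = x) ▸ hxs
    · exact absurd (Fin.ext (arc_unique hmp h1 h2)) hxy

include hj hlp hmp hls hms hheadm hind in
lemma no_cycle_comp : ∀ c : (MeanderGraph n lam mu).ConnectedComponent,
    ¬ IsCycleComp n lam mu c := by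
  intro c hcyc
  obtain ⟨v0, hv0⟩ := c.exists_rep
  apply core hj hlp hmp hls hms hheadm hind
    {v : Fin n | (MeanderGraph n lam mu).connectedComponentMk v = c} ⟨v0, hv0⟩
  · intro v hv
    exact hcyc v hv
  · intro v hv w hw
    have : (MeanderGraph n lam mu).connectedComponentMk w
        = (MeanderGraph n lam mu).connectedComponentMk v :=
      SimpleGraph.ConnectedComponent.sound hw.symm.reachable
    exact this.trans hv

end Cycles


end MeanderSpecific

end Meander17

open Meander17 in
/-- For `j ∈ {2,3,4,5,7}`, let `(λ, μ)` be an indecomposable meander on `n` nodes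
with parts in `{1, j}`, `λ₁ = j`, `μ₁ = 1`. If `N_o` is the total number of odd
parts among `λ` and `μ` combined, then `N_o` is even and the index of the meander
equals `N_o / 2`. -/
theorem stmt17 (n j : ℕ) (hj : j = 2 ∨ j = 3 ∨ j = 4 ∨ j = 5 ∨ j = 7)
    (lam mu : List ℕ)
    (hl : ∀ x ∈ lam, x = 1 ∨ x = j) (hm : ∀ x ∈ mu, x = 1 ∨ x = j)
    (hls : lam.sum = n) (hms : mu.sum = n)
    (hheadl : lam.head? = some j) (hheadm : mu.head? = some 1)
    (hind : PSums lam ∩ PSums mu = {n}) :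
    (lam.countP (fun p => p % 2 == 1) + mu.countP (fun p => p % 2 == 1)) % 2 = 0 ∧
    meanderIndex n lam mu
      = (lam.countP (fun p => p % 2 == 1) + mu.countP (fun p => p % 2 == 1)) / 2 := by
  classical
  have hj2 : 2 ≤ j := by omega
  have hnocyc := no_cycle_comp hj hl hm hls hms hheadm hind
  have hnc : numCycles n lam mu = 0 := by
    have hempty : {c : (MeanderGraph n lam mu).ConnectedComponent |
        IsCycleComp n lam mu c} = ∅ :=
      Set.eq_empty_iff_forall_notMem.mpr (fun c hc => hnocyc c hc)
    unfold numCycles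
    rw [hempty, Set.ncard_empty]
  have hnp : numPaths n lam mu
      = Nat.card (MeanderGraph n lam mu).ConnectedComponent := by
    have huniv : {c : (MeanderGraph n lam mu).ConnectedComponent |
        ¬ IsCycleComp n lam mu c} = Set.univ := by
      ext c
      simp only [Set.mem_setOf_eq, Set.mem_univ, iff_true]
      exact hnocyc c
    unfold numPaths
    rw [huniv, Set.ncard_univ]
  have hforest := forest_card (MeanderGraph n lam mu)
    (meander_acyclic hj hl hm hls hms hheadm hind)
  rw [Fintype.card_fin] at hforest
  letI : DecidableRel (MeanderGraph n lam mu).Adj := Classical.decRel _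
  have hE : Nat.card (MeanderGraph n lam mu).edgeSet
      = (MeanderGraph n lam mu).edgeFinset.card := by
    rw [Nat.card_coe_set_eq,
      ← Set.ncard_coe_finset ((MeanderGraph n lam mu).edgeFinset),
      SimpleGraph.coe_edgeFinset]
  have hdeg := SimpleGraph.sum_degrees_eq_twice_card_edges (MeanderGraph n lam mu)
  have hdeg2 : ∑ v : Fin n, (MeanderGraph n lam mu).degree v
      = (∑ v : Fin n, if Covered lam (v:ℕ) then 1 else 0)
        + (∑ v : Fin n, if Covered mu (v:ℕ) then 1 else 0) := by
    rw [← Finset.sum_add_distrib]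
    exact Finset.sum_congr rfl
      (fun v _ => degree_eq hj2 hl hm hls hms hheadm hind v)
  have hcount : ∀ (l : List ℕ), (∀ x ∈ l, x = 1 ∨ x = j) → l.sum = n →
      (∑ v : Fin n, if Covered l (v:ℕ) then 1 else 0)
        + l.countP (fun p => p % 2 == 1) = n := by
    intro l hl' hls'
    have h1 : (∑ v : Fin n, if Covered l (v:ℕ) then 1 else 0)
        = (Finset.univ.filter (fun v : Fin n => Covered l (v:ℕ))).card :=
      (Finset.card_filter _ _).symm
    have h2 : {v : Fin n | ¬ Covered l (v:ℕ)}.ncard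
        = (Finset.univ.filter (fun v : Fin n => ¬ Covered l (v:ℕ))).card := by
      rw [Set.ncard_eq_toFinset_card', Set.toFinset_setOf]
    have h3 := count_uncov hj2 hl' hls'
    have h4 := Finset.card_filter_add_card_filter_not
      (s := Finset.univ) (p := fun v : Fin n => Covered l (v:ℕ))
    rw [Finset.card_univ, Fintype.card_fin] at h4
    omega
  have hl1 := hcount lam hl hls
  have hm1 := hcount mu hm hms
  unfold meanderIndex
  rw [hnc, hnp]
  omega
end
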